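/- arXiv:2208.14963 — 12 statements merged into one kernel-verified Lean document; each statement's English description precedes it below -/
import Mathlib

section
/- For every n ≥ 6, there exists a binary string of length n that cannot be uniquely reconstructed up to reversal from its prefix-suffix composition multiset; concretely, the string 1 0 0 s_4 ... s_{n-3} 1 1 0 (for any middle symbols) shares its prefix-suffix composition multiset with a string that is neither itself nor its reversal. -/
/-!
Swapping two adjacent letters at positions `k, k + 1` changes exactly one prefix composition
(the prefix of length `k`) and one suffix composition (the suffix of length `n - k`). For
`s = 1 0 x 1 0` and `t = 0 1 x 0 1`, the compositions lost by swapping the first pair are those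
gained by swapping the last pair, so `M(t) = M(s)`. When `x` starts with `0` and ends with `1`,
`t` is neither `s` nor its reversal `0 1 xᴿ 0 1`.
-/

/-- The composition of a binary string: (length, number of ones). -/
def comp (t : List Bool) : ℕ × ℕ := (t.length, t.count true)

/-- The prefix-suffix composition multiset of a binary string. -/
def psM (s : List Bool) : Multiset (ℕ × ℕ) :=
  ((List.range s.length).map (fun j => comp (s.take (j + 1))) : Multiset (ℕ × ℕ))
  + ((List.range s.length).map (fun i => comp (s.drop i)) : Multiset (ℕ × ℕ))

theorem comp_eq_of_perm {t u : List Bool} (h : t.Perm u) : comp t = comp u := by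
  simp only [comp, h.length_eq, h.count_eq]

namespace List

variable {α : Type*}

theorem take_perm_take_swap (y z : List α) (a b : α) {k : ℕ} (hk : k ≠ y.length + 1) :
    (y ++ a :: b :: z).take k ~ (y ++ b :: a :: z).take k := by
  rw [take_append, take_append]
  refine Perm.append_left _ ?_
  rcases h : k - y.length with _ | _ | m
  · simp
  · omega
  · exact Perm.swap b a _

theorem drop_perm_drop_swap (y z : List α) (a b : α) {k : ℕ} (hk : k ≠ y.length + 1) :
    (y ++ a :: b :: z).drop k ~ (y ++ b :: a :: z).drop k := by
  rw [drop_append, drop_append]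
  refine Perm.append_left _ ?_
  rcases h : k - y.length with _ | _ | m
  · exact Perm.swap b a _
  · omega
  · simp

theorem exists_eq_take_append_append_drop (l : List α) {i j : ℕ} (h : i ≤ j) :
    ∃ m, l = l.take i ++ m ++ l.drop j := by
  refine ⟨(l.drop i).take (j - i), ?_⟩
  obtain ⟨k, rfl⟩ := Nat.exists_eq_add_of_le h
  rw [append_assoc, Nat.add_sub_cancel_left, ← drop_drop, take_append_drop, take_append_drop]

end List

theorem Multiset.map_add_singleton_eq_of_forall_ne {α β : Type*} [DecidableEq α]
    {s : Multiset α} (hs : s.Nodup) {f g : α → β} {i : α} (hi : i ∈ s)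
    (h : ∀ j ∈ s, j ≠ i → f j = g j) :
    s.map f + {g i} = s.map g + {f i} := by
  rw [← Multiset.cons_erase hi, Multiset.map_cons, Multiset.map_cons,
    Multiset.map_congr rfl fun j hj =>
      h j (Multiset.mem_of_mem_erase hj) ((hs.mem_erase_iff).1 hj).1]
  simp only [← Multiset.singleton_add]
  abel

theorem psM_swap (y z : List Bool) (a b : Bool) :
    psM (y ++ a :: b :: z) + {comp (y ++ [b]), comp (a :: z)}
      = psM (y ++ b :: a :: z) + {comp (y ++ [a]), comp (b :: z)} := by
  have hlen : (y ++ b :: a :: z).length = (y ++ a :: b :: z).length := by simp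
  have hnodup := Multiset.nodup_range (y ++ a :: b :: z).length
  have hprefix := Multiset.map_add_singleton_eq_of_forall_ne hnodup
    (f := fun j => comp ((y ++ a :: b :: z).take (j + 1)))
    (g := fun j => comp ((y ++ b :: a :: z).take (j + 1)))
    (i := y.length) (by simp) fun j _ hj =>
      comp_eq_of_perm (List.take_perm_take_swap y z a b (by omega))
  have hsuffix := Multiset.map_add_singleton_eq_of_forall_ne hnodup
    (f := fun j => comp ((y ++ a :: b :: z).drop j))
    (g := fun j => comp ((y ++ b :: a :: z).drop j))
    (i := y.length + 1) (by simp) fun j _ hj =>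
      comp_eq_of_perm (List.drop_perm_drop_swap y z a b hj)
  have htake (c d : Bool) : (y ++ c :: d :: z).take (y.length + 1) = y ++ [c] := by
    simp [List.take_append]
  have hdrop (c d : Bool) : (y ++ c :: d :: z).drop (y.length + 1) = d :: z := by simp
  beta_reduce at hprefix hsuffix
  rw [htake, htake] at hprefix
  rw [hdrop, hdrop] at hsuffix
  simp only [psM, hlen, ← Multiset.map_coe, Multiset.coe_range, Multiset.insert_eq_cons,
    ← Multiset.singleton_add]
  rw [add_add_add_comm, add_add_add_comm _ _ {_}]
  exact congrArg₂ (· + ·) hprefix hsuffix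

theorem psM_swap_ends (x : List Bool) (a b : Bool) :
    psM ([a, b] ++ x ++ [a, b]) = psM ([b, a] ++ x ++ [b, a]) := by
  simp only [List.cons_append, List.nil_append]
  have hhead := psM_swap [] (x ++ [a, b]) a b
  have htail := psM_swap (b :: a :: x) [] a b
  simp only [List.nil_append, List.cons_append] at hhead htail
  have hcomp₁ : comp (a :: (x ++ [a, b])) = comp (b :: a :: (x ++ [a])) :=
    comp_eq_of_perm (by simp [List.perm_iff_count, List.count_cons]; omega)
  have hcomp₂ : comp (b :: a :: (x ++ [b])) = comp (b :: (x ++ [a, b])) :=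
    comp_eq_of_perm (by simp [List.perm_iff_count, List.count_cons]; omega)
  refine add_right_cancel
    (b := {comp [b], comp (a :: (x ++ [a, b]))} + {comp (b :: a :: (x ++ [b])), comp [a]}) ?_
  calc _ = psM (b :: a :: (x ++ [a, b])) + {comp [a], comp (b :: (x ++ [a, b]))}
          + {comp (b :: a :: (x ++ [b])), comp [a]} := by rw [← add_assoc, hhead]
    _ = psM (b :: a :: (x ++ [b, a])) + {comp (b :: a :: (x ++ [a])), comp [b]}
          + {comp [a], comp (b :: (x ++ [a, b]))} := by rw [add_right_comm, htail]
    _ = _ := by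
      rw [hcomp₁, hcomp₂]
      simp only [Multiset.insert_eq_cons, ← Multiset.singleton_add]
      abel

theorem exists_not_unique_of_six_le_general (n : ℕ) (hn : 6 ≤ n) (s : List Bool)
    (hpre : s.take 3 = [true, false, false]) (hsuf : s.drop (n - 3) = [true, true, false]) :
    ∃ t : List Bool, psM t = psM s ∧ t ≠ s ∧ t ≠ s.reverse := by
  obtain ⟨m, hm⟩ := s.exists_eq_take_append_append_drop (i := 3) (j := n - 3) (by omega)
  rw [hpre, hsuf] at hm
  subst hm
  refine ⟨[false, true] ++ (false :: m ++ [true]) ++ [false, true], ?_, ?_, ?_⟩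
  · simpa using psM_swap_ends (false :: m ++ [true]) false true
  · simp
  · simp

theorem exists_not_unique_of_six_le (n : ℕ) (hn : 6 ≤ n) (s : List Bool) (hs : s.length = n)
    (hpre : s.take 3 = [true, false, false]) (hsuf : s.drop (n - 3) = [true, true, false]) :
    ∃ t : List Bool, psM t = psM s ∧ t ≠ s ∧ t ≠ s.reverse :=
  exists_not_unique_of_six_le_general n hn s hpre hsuf
end

section
/- Let s be a binary string of length n such that wt(s_1^j) ≠ wt(s_{n-j+1}^n) for all 1 ≤ j ≤ n-1. Then s is uniquely reconstructible up to reversal from its prefix-suffix composition multiset. -/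
theorem Multiset.pair_eq_pair_iff {α : Type*} {a b c d : α} :
    ({a, b} : Multiset α) = {c, d} ↔ a = c ∧ b = d ∨ a = d ∧ b = c := by
  refine ⟨fun h => ?_, ?_⟩
  · simp only [insert_eq_cons, cons_eq_cons, singleton_inj, singleton_eq_cons_iff] at h
    aesop
  · rintro (⟨rfl, rfl⟩ | ⟨rfl, rfl⟩)
    · rfl
    · exact pair_comm _ _

theorem Multiset.filter_eq_singleton_of_nodup {α : Type*} {s : Multiset α} {p : α → Prop}
    [DecidablePred p] {a : α} (hs : s.Nodup) (ha : a ∈ s) (hp : ∀ x ∈ s, p x ↔ x = a) :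
    s.filter p = {a} := by
  classical
  rw [filter_congr hp]
  convert filter_eq' s a
  rw [count_eq_one_of_mem hs ha, replicate_one]

def UnitSteps (f : ℕ → ℕ) : Prop :=
  ∀ j, f j ≤ f (j + 1) ∧ f (j + 1) ≤ f j + 1

namespace UnitSteps

variable {f g f' g' : ℕ → ℕ}

theorem eq_succ_of_eq (hf : UnitSteps f) (hg : UnitSteps g) (hf' : UnitSteps f')
    (hg' : UnitSteps g') {j : ℕ} (hne : f j ≠ g j)
    (hpair : ({f' (j + 1), g' (j + 1)} : Multiset ℕ) = {f (j + 1), g (j + 1)})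
    (h : f' j = f j ∧ g' j = g j) : f' (j + 1) = f (j + 1) ∧ g' (j + 1) = g (j + 1) := by
  rcases Multiset.pair_eq_pair_iff.1 hpair with hstraight | ⟨hswap₁, hswap₂⟩
  · exact hstraight
  · -- a swap forces `f (j + 1) = g (j + 1) = max (f j) (g j)`, so it is no swap at all
    have := hf j; have := hg j; have := hf' j; have := hg' j
    omega

theorem eq_on_Icc_of_eq (hf : UnitSteps f) (hg : UnitSteps g) (hf' : UnitSteps f')
    (hg' : UnitSteps g') {a b : ℕ} (hne : ∀ j ∈ Set.Ico a b, f j ≠ g j)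
    (hpair : ∀ j ∈ Set.Icc a b, ({f' j, g' j} : Multiset ℕ) = {f j, g j})
    (ha : f' a = f a ∧ g' a = g a) : ∀ j ∈ Set.Icc a b, f' j = f j ∧ g' j = g j := by
  rintro j ⟨haj, hjb⟩
  induction j, haj using Nat.le_induction with
  | base => exact ha
  | succ j haj ih =>
    exact eq_succ_of_eq hf hg hf' hg' (hne j ⟨haj, hjb⟩) (hpair (j + 1) ⟨by omega, hjb⟩)
      (ih (by omega))

theorem eq_or_eq_of_pair_eq (hf : UnitSteps f) (hg : UnitSteps g) (hf' : UnitSteps f')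
    (hg' : UnitSteps g') {a b : ℕ} (hne : ∀ j ∈ Set.Ico a b, f j ≠ g j)
    (hpair : ∀ j ∈ Set.Icc a b, ({f' j, g' j} : Multiset ℕ) = {f j, g j}) :
    (∀ j ∈ Set.Icc a b, f' j = f j) ∨ (∀ j ∈ Set.Icc a b, f' j = g j) := by
  rcases lt_or_ge b a with hba | hab
  · exact .inl fun j hj => absurd (hj.1.trans hj.2) hba.not_ge
  rcases Multiset.pair_eq_pair_iff.1 (hpair a ⟨le_rfl, hab⟩) with ha | ha
  · exact .inl fun j hj => (eq_on_Icc_of_eq hf hg hf' hg' hne hpair ha j hj).1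
  · exact .inr fun j hj => (eq_on_Icc_of_eq hg hf hf' hg' (fun j hj => (hne j hj).symm)
      (fun j hj => (hpair j hj).trans (Multiset.pair_comm _ _)) ha j hj).1

end UnitSteps

def prefixWeight (s : List Bool) (j : ℕ) : ℕ :=
  (s.take j).count true

theorem prefixWeight_succ {s : List Bool} {j : ℕ} (hj : j < s.length) :
    prefixWeight s (j + 1) = prefixWeight s j + s[j].toNat := by
  rw [prefixWeight, List.take_add_one, List.count_append, List.getElem?_eq_getElem hj]
  cases s[j] <;> rfl

theorem unitSteps_prefixWeight (s : List Bool) : UnitSteps (prefixWeight s) := fun j => by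
  rcases lt_or_ge j s.length with hj | hj
  · rw [prefixWeight_succ hj]
    exact ⟨Nat.le_add_right _ _, Nat.add_le_add_left (Bool.toNat_le _) _⟩
  · rw [prefixWeight, prefixWeight, List.take_of_length_le hj, List.take_of_length_le (by omega)]
    omega

theorem prefixWeight_reverse (s : List Bool) (j : ℕ) :
    prefixWeight s.reverse j = (s.drop (s.length - j)).count true := by
  rw [prefixWeight, List.take_reverse, List.count_reverse]

theorem eq_of_prefixWeight_eq {s t : List Bool} (hl : t.length = s.length)
    (h : ∀ j ∈ Set.Icc 1 s.length, prefixWeight t j = prefixWeight s j) : t = s := by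
  refine List.ext_getElem hl fun i hit his => ?_
  have hi : prefixWeight t i = prefixWeight s i := by
    rcases i with _ | i
    · rfl
    · exact h (i + 1) ⟨by omega, his.le⟩
  have hsucc := h (i + 1) ⟨by omega, his⟩
  rw [prefixWeight_succ hit, prefixWeight_succ his, hi] at hsucc
  cases ht : t[i] <;> cases hs : s[i] <;> simp_all

theorem card_psM (s : List Bool) : Multiset.card (psM s) = 2 * s.length := by
  simp only [psM, Multiset.coe_add, Multiset.coe_card, List.length_append, List.length_map,
    List.length_range, two_mul]

theorem map_snd_filter_psM (s : List Bool) {j : ℕ} (hj : j ∈ Set.Icc 1 s.length) :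
    ((psM s).filter (·.1 = j)).map Prod.snd = {prefixWeight s j, prefixWeight s.reverse j} := by
  obtain ⟨hj1, hjn⟩ := hj
  have hpre : (Multiset.range s.length).filter ((·.1 = j) ∘ fun i => comp (s.take (i + 1))) =
      {j - 1} := Multiset.filter_eq_singleton_of_nodup (Multiset.nodup_range _)
        (Multiset.mem_range.2 (by omega)) fun i hi => by
    simp only [Function.comp, comp, List.length_take, Multiset.mem_range] at hi ⊢; omega
  have hsuf : (Multiset.range s.length).filter ((·.1 = j) ∘ fun i => comp (s.drop i)) =
      {s.length - j} := Multiset.filter_eq_singleton_of_nodup (Multiset.nodup_range _)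
        (Multiset.mem_range.2 (by omega)) fun i hi => by
    simp only [Function.comp, comp, List.length_drop, Multiset.mem_range] at hi ⊢; omega
  simp only [psM, ← Multiset.map_coe, Multiset.coe_range, Multiset.filter_add, Multiset.filter_map]
  rw [hpre, hsuf]
  simp only [Multiset.map_singleton, Multiset.singleton_add, comp, Nat.sub_add_cancel hj1,
    prefixWeight_reverse]
  rfl

theorem length_eq_of_psM_eq {s t : List Bool} (h : psM t = psM s) : t.length = s.length := by
  have := congrArg Multiset.card h
  rw [card_psM, card_psM] at this
  omega

theorem unique_of_all_prefix_suffix_weights_distinct (n : ℕ) (s : List Bool) (hs : s.length = n)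
    (h : ∀ j, 1 ≤ j → j ≤ n - 1 →
      (s.take j).count true ≠ (s.drop (n - j)).count true) :
    ∀ t : List Bool, psM t = psM s → t = s ∨ t = s.reverse := by
  intro t hM
  subst hs
  have hlen : t.length = s.length := length_eq_of_psM_eq hM
  have hpair : ∀ j ∈ Set.Icc 1 s.length, ({prefixWeight t j, prefixWeight t.reverse j} :
      Multiset ℕ) = {prefixWeight s j, prefixWeight s.reverse j} := fun j hj => by
    rw [← map_snd_filter_psM s hj, ← hM, map_snd_filter_psM t (hlen ▸ hj)]
  have hne : ∀ j ∈ Set.Ico 1 s.length, prefixWeight s j ≠ prefixWeight s.reverse j :=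
    fun j hj => by
      rw [prefixWeight_reverse]
      exact h j hj.1 (Nat.le_sub_one_of_lt hj.2)
  rcases (unitSteps_prefixWeight s).eq_or_eq_of_pair_eq (unitSteps_prefixWeight _)
    (unitSteps_prefixWeight t) (unitSteps_prefixWeight _) hne hpair with hstraight | hswap
  · exact .inl (eq_of_prefixWeight_eq hlen hstraight)
  · exact .inr (eq_of_prefixWeight_eq (by simpa using hlen) (by simpa using hswap))
end

section
/- Let s ∈ {0,1}^n with wt(s_1^j) ≠ wt(s_{n-j+1}^n) for all 1 ≤ j ≤ n-1. Then either wt(s_1^j) > wt(s_{n-j+1}^n) for all 1 ≤ j ≤ n-1, or wt(s_1^j) < wt(s_{n-j+1}^n) for all 1 ≤ j ≤ n-1. -/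
theorem prefix_suffix_weights_monotone_sign (n : ℕ) (s : List Bool) (hs : s.length = n)
    (h : ∀ j, 1 ≤ j → j ≤ n - 1 →
      (s.take j).count true ≠ (s.drop (n - j)).count true) :
    (∀ j, 1 ≤ j → j ≤ n - 1 →
        (s.drop (n - j)).count true < (s.take j).count true) ∨
    (∀ j, 1 ≤ j → j ≤ n - 1 →
        (s.take j).count true < (s.drop (n - j)).count true) := by
  subst hs
  set n := s.length with hn
  -- integer difference
  set g : ℕ → ℤ := fun j =>
    ((s.take j).count true : ℤ) - ((s.drop (n - j)).count true : ℤ) with hg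
  have step : ∀ j, j + 1 ≤ n → g j - 1 ≤ g (j + 1) ∧ g (j + 1) ≤ g j + 1 := by
    intro j hj1
    have hjlt : j < s.length := by omega
    have hdlt : n - (j + 1) < s.length := by omega
    have hsum : n - (j + 1) + 1 = n - j := by omega
    have htake : (s.take (j + 1)).count true
        = (s.take j).count true + (if s[j] = true then 1 else 0) := by
      rw [List.take_succ, List.count_append, List.getElem?_eq_getElem hjlt]
      by_cases hb : s[j] = true <;> simp [hb, List.count_singleton]
    have hdrop : (s.drop (n - (j + 1))).count true
        = (s.drop (n - j)).count true + (if s[n - (j+1)] = true then 1 else 0) := by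
      rw [List.drop_eq_getElem_cons hdlt, hsum, List.count_cons]
      by_cases hb : s[n - (j+1)] = true <;> simp [hb] <;> omega
    simp only [hg]
    rw [htake, hdrop]
    by_cases hb : s[j] = true <;> by_cases hc : s[n - (j+1)] = true <;>
      simp [hb, hc] <;> push_cast <;> omega
  have hne : ∀ j, 1 ≤ j → j ≤ n - 1 → g j ≠ 0 := by
    intro j h1 h2 h0
    exact h j h1 h2 (by simpa [hg, sub_eq_zero] using h0)
  by_cases hn2 : 2 ≤ n
  · have h1 := hne 1 le_rfl (by omega)
    rcases lt_or_gt_of_ne h1 with hneg | hpos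
    · right
      have key : ∀ j, 1 ≤ j → j ≤ n - 1 → g j < 0 := by
        intro j hj1 hj2
        induction j with
        | zero => omega
        | succ k ih =>
          rcases Nat.eq_or_lt_of_le hj1 with he | hlt
          · simpa [← he] using hneg
          · have hk := ih (by omega) (by omega)
            have := step k (by omega)
            have := hne (k + 1) (by omega) (by omega)
            omega
      intro j hj1 hj2
      have := key j hj1 hj2
      simp only [hg] at this
      omega
    · left
      have key : ∀ j, 1 ≤ j → j ≤ n - 1 → 0 < g j := by
        intro j hj1 hj2
        induction j with
        | zero => omega
        | succ k ih =>
          rcases Nat.eq_or_lt_of_le hj1 with he | hlt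
          · simpa [← he] using hpos
          · have hk := ih (by omega) (by omega)
            have := step k (by omega)
            have := hne (k + 1) (by omega) (by omega)
            omega
      intro j hj1 hj2
      have := key j hj1 hj2
      simp only [hg] at this
      omega
  · left
    intro j h1 h2
    omega
end

section
/- Let s ∈ {0,1}^n with s_1 = 0, s_n = 1, and let I = {i : s_i ≠ s_{n-i+1}}. If wt(s_1^j) ≠ wt(s_{n-j+1}^n) for all 1 ≤ j ≤ n-1, then wt(s_1^j) < wt(s_{n-j+1}^n) for all 1 ≤ j ≤ n-1, and the subsequence of s indexed by I ∩ {1,...,⌊n/2⌋} is a Catalan-Bertrand string. -/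
namespace CBaux

def dd (s : List Bool) (n i : ℕ) : ℤ :=
  (if s.getD i false then 1 else 0) - (if s.getD (n-1-i) false then 1 else 0)

def FF (s : List Bool) (n j : ℕ) : ℤ :=
  ((s.take j).count true : ℤ) - ((s.drop (n-j)).count true : ℤ)

lemma FF_step (s : List Bool) (n : ℕ) (hs : s.length = n) (j : ℕ) (hj : j < n) :
    FF s n (j+1) = FF s n j + dd s n j := by
  have hjl : j < s.length := by omega
  have hdl : n - (j+1) < s.length := by omega
  have h1 : (s.take (j+1)).count true = (s.take j).count true + (if s.getD j false then 1 else 0) := by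
    rw [List.take_succ, List.count_append, List.getD_eq_getElem s false hjl,
      List.getElem?_eq_getElem hjl]
    by_cases hb : s[j] = true <;> simp [hb]
  have h2 : (s.drop (n-(j+1))).count true
      = (s.drop (n-j)).count true + (if s.getD (n-1-j) false then 1 else 0) := by
    rw [List.drop_eq_getElem_cons hdl, List.count_cons]
    have e1 : n - (j+1) + 1 = n - j := by omega
    rw [e1, List.getD_eq_getElem s false (by omega : n-1-j < s.length)]
    have e2 : s[n - (j+1)] = s[n-1-j] := by congr 1; omega
    rw [e2]
    by_cases hb : s[n-1-j] = true <;> simp [hb]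
  simp only [FF, dd, h1, h2]
  push_cast
  by_cases hb1 : s.getD j false <;> by_cases hb2 : s.getD (n-1-j) false <;> simp [hb1, hb2] <;> ring

lemma count_sub_count (v : List Bool) :
    (v.map (fun b => if b then (1:ℤ) else -1)).sum
      = (v.count true : ℤ) - (v.count false : ℤ) := by
  induction v with
  | nil => simp
  | cons b t ih =>
    cases b <;> simp [List.count_cons, ih] <;> ring

lemma prefix_filter (p : ℕ → Bool) :
    ∀ N k, k ≤ ((List.range N).filter p).length →
      ∃ m ≤ N, ((List.range N).filter p).take k = (List.range m).filter p ∧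
        (((List.range m).filter p).length = k) := by
  intro N
  induction N with
  | zero =>
    intro k hk
    simp at hk
    exact ⟨0, le_refl 0, by simp [hk], by simp [hk]⟩
  | succ N ih =>
    intro k hk
    rw [List.range_succ, List.filter_append] at hk ⊢
    by_cases hkN : k ≤ ((List.range N).filter p).length
    · obtain ⟨m, hm, hA, hB⟩ := ih k hkN
      exact ⟨m, le_trans hm (Nat.le_succ N),
        by rw [List.take_append_of_le_length hkN, hA], hB⟩
    · by_cases hp : p N
      · have hlen : ([N].filter p) = [N] := by simp [hp]
        rw [hlen] at hk ⊢
        have hk' : k = ((List.range N).filter p).length + 1 := by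
          simp at hk; omega
        refine ⟨N+1, le_refl _, ?_, ?_⟩
        · rw [List.take_of_length_le (by simp; omega), List.range_succ,
            List.filter_append, hlen]
        · rw [List.range_succ, List.filter_append, hlen]
          simp [hk']
      · exfalso
        have : ([N].filter p) = [] := by simp [hp]
        rw [this] at hk
        simp at hk
        omega

lemma FF_sum (s : List Bool) (n : ℕ) (hs : s.length = n) :
    ∀ m ≤ n, ((((List.range m).filter
        (fun i => s.getD i false ≠ s.getD (n - 1 - i) false)).map (dd s n)).sum
      = FF s n m) := by
  intro m
  induction m with
  | zero =>
    intro _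
    simp only [FF, List.range_zero, List.filter_nil, List.map_nil, List.sum_nil,
      List.take_zero, Nat.sub_zero, ← hs, List.drop_length]
    simp
  | succ m ih =>
    intro hm
    rw [List.range_succ, List.filter_append, List.map_append, List.sum_append,
      ih (by omega), FF_step s n hs m (by omega)]
    by_cases hp : s.getD m false = s.getD (n - 1 - m) false
    · have hd0 : dd s n m = 0 := by unfold dd; rw [hp]; exact sub_self _
      have hf : List.filter (fun i => decide (s.getD i false ≠ s.getD (n-1-i) false)) [m]
          = [] := by
        rw [List.filter_singleton,
          decide_eq_false (show ¬ s.getD m false ≠ s.getD (n-1-m) false from fun h => h hp)]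
        rfl
      rw [hf, hd0]
      simp
    · have hf : List.filter (fun i => decide (s.getD i false ≠ s.getD (n-1-i) false)) [m]
          = [m] := by
        rw [List.filter_singleton,
          decide_eq_true (show s.getD m false ≠ s.getD (n-1-m) false from hp)]
        rfl
      rw [hf]
      simp

lemma FF_neg (s : List Bool) (n : ℕ) (hs : s.length = n)
    (h1 : s.getD 0 false = false) (hn : s.getD (n - 1) false = true)
    (h : ∀ j, 1 ≤ j → j ≤ n - 1 →
      (s.take j).count true ≠ (s.drop (n - j)).count true) :
    ∀ j, 1 ≤ j → j ≤ n - 1 → FF s n j < 0 := by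
  have hF0 : FF s n 0 = 0 := by
    simp only [FF, List.take_zero, Nat.sub_zero, ← hs, List.drop_length]
    simp
  have hne : ∀ j, 1 ≤ j → j ≤ n - 1 → FF s n j ≠ 0 := by
    intro j hj1 hj2 hF
    apply h j hj1 hj2
    simp only [FF, sub_eq_zero] at hF
    exact_mod_cast hF
  intro j
  induction j with
  | zero => omega
  | succ j ih =>
    intro hj1 hj2
    have hstep := FF_step s n hs j (by omega)
    have hd : -1 ≤ dd s n j ∧ dd s n j ≤ 1 := by
      unfold dd
      split <;> split <;> norm_num
    have hne' := hne (j+1) hj1 hj2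
    rcases Nat.eq_zero_or_pos j with hj0 | hjpos
    · subst hj0
      rw [hstep, hF0]
      have : dd s n 0 = -1 := by
        unfold dd
        simp only [Nat.sub_zero, h1, hn]
        norm_num
      omega
    · have := ih hjpos (by omega)
      omega

end CBaux

/-- A Catalan-Bertrand string: every nonempty prefix has strictly more 0s than 1s. -/
def CatalanBertrand (u : List Bool) : Prop :=
  ∀ k, 1 ≤ k → k ≤ u.length → (u.take k).count true < (u.take k).count false

theorem catalanBertrand_structure (n : ℕ) (s : List Bool) (hs : s.length = n)
    (h1 : s.getD 0 false = false) (hn : s.getD (n - 1) false = true)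
    (h : ∀ j, 1 ≤ j → j ≤ n - 1 →
      (s.take j).count true ≠ (s.drop (n - j)).count true) :
    (∀ j, 1 ≤ j → j ≤ n - 1 →
        (s.take j).count true < (s.drop (n - j)).count true) ∧
    CatalanBertrand
      (((List.range (n / 2)).filter
          (fun i => s.getD i false ≠ s.getD (n - 1 - i) false)).map
        (fun i => s.getD i false)) := by
  have hn2 : 2 ≤ n := by
    by_contra hc
    push_neg at hc
    interval_cases n
    · simp [List.length_eq_zero_iff.mp hs] at hn
    · simp only [Nat.sub_self] at hn
      rw [h1] at hn
      exact absurd hn (by simp)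
  have hFneg := CBaux.FF_neg s n hs h1 hn h
  constructor
  · intro j hj1 hj2
    have := hFneg j hj1 hj2
    simp only [CBaux.FF] at this
    omega
  · intro k hk1 hk2
    rw [List.length_map] at hk2
    obtain ⟨m, hmN, htake, hlen⟩ := CBaux.prefix_filter
      (fun i => decide (s.getD i false ≠ s.getD (n - 1 - i) false)) (n/2) k hk2
    rw [← List.map_take, htake]
    have hm1 : 1 ≤ m := by
      rcases Nat.eq_zero_or_pos m with h0 | h0
      · subst h0; simp at hlen; omega
      · exact h0
    have hmn : m ≤ n - 1 := by omega
    have hFm := hFneg m hm1 hmn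
    have hsum := CBaux.FF_sum s n hs m (by omega)
    set L' := (List.range m).filter
      (fun i => decide (s.getD i false ≠ s.getD (n - 1 - i) false)) with hL'
    have hall : ∀ i ∈ L', CBaux.dd s n i
        = (fun b => if b then (1:ℤ) else -1) (s.getD i false) := by
      intro i hi
      have hpi := List.of_mem_filter hi
      have hne : s.getD i false ≠ s.getD (n-1-i) false := of_decide_eq_true hpi
      unfold CBaux.dd
      cases hb1 : s.getD i false <;> cases hb2 : s.getD (n-1-i) false <;>
        simp_all
    have hmm : (L'.map (CBaux.dd s n)).sum
        = ((L'.map (fun i => s.getD i false)).map (fun b => if b then (1:ℤ) else -1)).sum := by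
      rw [List.map_map]
      exact congrArg List.sum (List.map_congr_left hall)
    rw [hmm, CBaux.count_sub_count] at hsum
    rw [← hsum] at hFm
    omega
end

section
/- Let m ≥ 4 be even and u ∈ {0,1}^m satisfy wt(u_1^{m/2}) = wt(u_{m/2+1}^m) and wt(u_1^k) ≠ wt(u_{m-k+1}^m) for all 1 ≤ k < m/2. If u_1 = 1 then u_m = 0, u_{m/2} = 0, u_{m/2+1} = 1, and the subsequence of u on indices I = {i : 2 ≤ i ≤ m/2 - 1, u_i ≠ u_{m-i+1}} is a Dyck string (if nonempty). -/
/-- A Dyck string of length `2h`: exactly `h` ones, and every prefix of length `i`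
contains at least `⌈i/2⌉` ones. -/
def IsDyck (u : List Bool) : Prop :=
  u.length % 2 = 0 ∧ u.count true = u.length / 2 ∧
  ∀ i, 1 ≤ i → i ≤ u.length - 1 → (i + 1) / 2 ≤ (u.take i).count true

theorem dyck_structure (m : ℕ) (hm4 : 4 ≤ m) (hme : m % 2 = 0) (u : List Bool)
    (hu : u.length = m)
    (hmid : (u.take (m / 2)).count true = (u.drop (m / 2)).count true)
    (h : ∀ k, 1 ≤ k → k < m / 2 →
      (u.take k).count true ≠ (u.drop (m - k)).count true)
    (h1 : u.getD 0 false = true) :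
    u.getD (m - 1) false = false ∧
    u.getD (m / 2 - 1) false = false ∧
    u.getD (m / 2) false = true ∧
    (((List.Ico 1 (m / 2 - 1)).filter
          (fun i => u.getD i false ≠ u.getD (m - 1 - i) false)).map
        (fun i => u.getD i false) ≠ [] →
      IsDyck (((List.Ico 1 (m / 2 - 1)).filter
          (fun i => u.getD i false ≠ u.getD (m - 1 - i) false)).map
        (fun i => u.getD i false))) := by
  have hn2 : 2 ≤ m / 2 := by omega
  set n := m / 2 with hn
  have hmn : m = 2 * n := by omega
  set f : ℕ → ℤ := fun k =>
    ((u.take k).count true : ℤ) - ((u.drop (m - k)).count true : ℤ) with hf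
  -- counting steps
  have htake : ∀ k, k < m → (u.take (k+1)).count true
      = (u.take k).count true + (if u.getD k false then 1 else 0) := by
    intro k hk
    have hk' : k < u.length := by omega
    rw [List.take_succ, List.getElem?_eq_getElem hk', List.getD_eq_getElem u false hk']
    cases hb : u[k] <;> simp [hb, List.count_append]
  have hdrop : ∀ k, k < m → (u.drop (m - (k+1))).count true
      = (u.drop (m - k)).count true + (if u.getD (m - 1 - k) false then 1 else 0) := by
    intro k hk
    have hk' : m - 1 - k < u.length := by omega
    rw [show m - (k+1) = m - 1 - k by omega, List.drop_eq_getElem_cons hk',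
      show m - 1 - k + 1 = m - k by omega, List.count_cons,
      List.getD_eq_getElem u false hk']
    cases hb : u[m - 1 - k] <;> simp [hb]
  have hstep : ∀ k, k < m → f (k+1) = f k +
      ((if u.getD k false then (1:ℤ) else 0) - (if u.getD (m - 1 - k) false then 1 else 0)) := by
    intro k hk
    simp only [hf]
    rw [htake k hk, hdrop k hk]
    push_cast
    ring
  have hne : ∀ k, 1 ≤ k → k < n → f k ≠ 0 := by
    intro k hk1 hk2 h0
    exact h k hk1 hk2 (Nat.cast_inj.mp (sub_eq_zero.mp h0))
  have hf0 : f 0 = 0 := by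
    have hd : u.drop m = [] := List.drop_eq_nil_of_le (by omega)
    simp [hf, hd]
  have hf1' : f 1 = 1 - (if u.getD (m - 1) false then 1 else 0) := by
    have := hstep 0 (by omega)
    rw [hf0, h1] at this
    simpa using this
  have hum : u.getD (m - 1) false = false := by
    cases hb : u.getD (m - 1) false
    · rfl
    · exfalso
      apply hne 1 le_rfl (by omega)
      rw [hf1', hb]; simp
  have hf1 : f 1 = 1 := by rw [hf1', hum]; simp
  have hfge : ∀ k, 1 ≤ k → k ≤ n - 1 → 1 ≤ f k := by
    intro k hk1
    induction k, hk1 using Nat.le_induction with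
    | base => intro _; rw [hf1]
    | succ k hk ih =>
      intro hk2
      have hfk := ih (by omega)
      have hs := hstep k (by omega)
      have hne' := hne (k+1) (by omega) (by omega)
      split_ifs at hs <;> omega
  have hfn0 : f n = 0 := by
    simp only [hf, show m - n = n by omega, hmid, sub_self]
  have hsn := hstep (n-1) (by omega)
  rw [show n - 1 + 1 = n by omega, show m - 1 - (n-1) = n by omega] at hsn
  have hge := hfge (n-1) (by omega) le_rfl
  have hmidvals : u.getD (n-1) false = false ∧ u.getD n false = true ∧ f (n-1) = 1 := by
    cases hb1 : u.getD (n-1) false <;> cases hb2 : u.getD n false <;>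
      rw [hb1, hb2] at hsn <;> simp at hsn <;>
      first
        | (exact ⟨rfl, rfl, by omega⟩)
        | omega
  refine ⟨hum, hmidvals.1, hmidvals.2.1, ?_⟩
  -- the Dyck part
  set V : ℕ → List Bool := fun k =>
    ((List.Ico 1 k).filter (fun i => u.getD i false ≠ u.getD (m - 1 - i) false)).map
      (fun i => u.getD i false) with hV
  have hVstep : ∀ k, 1 ≤ k → V (k+1) = V k ++
      (if u.getD k false ≠ u.getD (m - 1 - k) false then [u.getD k false] else []) := by
    intro k hk1
    simp only [hV, List.Ico.succ_top hk1, List.filter_append, List.map_append]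
    congr 1
    rw [List.filter_singleton]
    by_cases hpk : u.getD k false = u.getD (m - 1 - k) false
    · rw [if_neg (fun hc => hc hpk),
        show (decide (u.getD k false ≠ u.getD (m - 1 - k) false)) = false by simpa using hpk]
      rfl
    · rw [if_pos hpk,
        show (decide (u.getD k false ≠ u.getD (m - 1 - k) false)) = true by simpa using hpk]
      rfl
  have hVd : ∀ k, 1 ≤ k → k ≤ n - 1 →
      2 * (((V k).count true : ℤ)) - (V k).length = f k - 1 := by
    intro k hk1
    induction k, hk1 using Nat.le_induction with
    | base => intro _; simp [hV, hf1]
    | succ k hk ih =>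
      intro hk2
      have hkd := ih (by omega)
      have hs := hstep k (by omega)
      rw [hVstep k hk]
      cases hb1 : u.getD k false <;> cases hb2 : u.getD (m - 1 - k) false <;>
        simp only [hb1, hb2] at hs ⊢ <;>
        simp [List.count_append] at hs ⊢ <;>
        push_cast <;>
        omega
  have hpre : ∀ K, 1 ≤ K → ∀ i, ∃ k, 1 ≤ k ∧ k ≤ K ∧
      (V K).take i = V k ∧ (V k).length = min i (V K).length := by
    intro K hK1
    induction K, hK1 using Nat.le_induction with
    | base =>
      intro i
      refine ⟨1, le_rfl, le_rfl, ?_, ?_⟩ <;> simp [hV]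
    | succ K hK ih =>
      intro i
      rw [hVstep K hK]
      rcases le_or_gt i (V K).length with hi | hi
      · obtain ⟨k, hk1, hk2, ht, hl⟩ := ih i
        refine ⟨k, hk1, by omega, ?_, ?_⟩
        · rw [List.take_append_of_le_length hi, ht]
        · rw [List.length_append]
          omega
      · have htl : (if u.getD K false ≠ u.getD (m - 1 - K) false
            then [u.getD K false] else []).length ≤ 1 := by
          split_ifs <;> simp
        refine ⟨K+1, by omega, le_rfl, ?_, ?_⟩
        · rw [List.take_of_length_le (by rw [List.length_append]; omega),
            hVstep K hK]
        · rw [hVstep K hK, List.length_append]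
          omega
  intro hnil
  change IsDyck (V (n-1))
  have hd := hVd (n-1) (by omega) le_rfl
  rw [hmidvals.2.2] at hd
  have hcl : 2 * (V (n-1)).count true = (V (n-1)).length := by exact_mod_cast by omega
  refine ⟨by omega, by omega, ?_⟩
  intro i hi1 hi2
  obtain ⟨k, hk1, hk2, ht, hl⟩ := hpre (n-1) (by omega) i
  have hdk := hVd k hk1 hk2
  have hfk := hfge k hk1 hk2
  have hlk : (V k).length = i := by omega
  rw [ht]
  have h2 : (i : ℤ) ≤ 2 * ((V k).count true : ℤ) := by omega
  have h2' : i ≤ 2 * (V k).count true := by exact_mod_cast h2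
  omega
end

section
/- The number of Catalan-Bertrand strings of length i equals binomial(i-1, (i-1)/2) if i is odd, and equals (1/2) * binomial(i, i/2) if i ≥ 2 is even. -/
def IsBallot (u : List Bool) : Prop :=
  ∀ k, (u.take k).count true ≤ (u.take k).count false

def ballotStrings (n : ℕ) : Set (List Bool) :=
  {u | u.length = n ∧ IsBallot u}

def dyckStrings (n : ℕ) : Set (List Bool) :=
  {u | u.length = n ∧ IsBallot u ∧ u.count true = u.count false}

lemma IsBallot.count_le {u : List Bool} (hu : IsBallot u) : u.count true ≤ u.count false := by
  simpa using hu u.length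

lemma isBallot_nil : IsBallot [] := by
  simp [IsBallot]

lemma isBallot_append_singleton {u : List Bool} {b : Bool} :
    IsBallot (u ++ [b]) ↔ IsBallot u ∧ (u ++ [b]).count true ≤ (u ++ [b]).count false := by
  refine ⟨fun h => ⟨fun k => ?_, h.count_le⟩, fun ⟨hu, hub⟩ k => ?_⟩
  · rcases le_or_gt k u.length with hk | hk
    · simpa [List.take_append_of_le_length hk] using h k
    · simpa [List.take_of_length_le hk.le] using h u.length
  · rcases le_or_gt k u.length with hk | hk
    · simpa [List.take_append_of_le_length hk] using hu k
    · rwa [List.take_of_length_le (by simpa using hk)]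

lemma isBallot_append_false {u : List Bool} : IsBallot (u ++ [false]) ↔ IsBallot u := by
  rw [isBallot_append_singleton, and_iff_left_of_imp]
  intro hu
  simpa [List.count_append] using hu.count_le.trans (Nat.le_succ _)

lemma isBallot_append_true {u : List Bool} :
    IsBallot (u ++ [true]) ↔ IsBallot u ∧ u.count true < u.count false := by
  simp [isBallot_append_singleton, List.count_append]

lemma catalanBertrand_cons_false {u : List Bool} :
    CatalanBertrand (false :: u) ↔ IsBallot u := by
  refine ⟨fun h k => ?_, fun h k hk _ => ?_⟩
  · rcases le_or_gt k u.length with hk | hk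
    · simpa [Nat.lt_succ_iff] using h (k + 1) (by omega) (by simpa using hk)
    · simpa [List.take_of_length_le hk.le, Nat.lt_succ_iff] using
        h (u.length + 1) (by omega) (by simp)
  · obtain ⟨j, rfl⟩ := Nat.exists_eq_add_of_le' hk
    simpa [Nat.lt_succ_iff] using h j

lemma not_catalanBertrand_cons_true (u : List Bool) : ¬ CatalanBertrand (true :: u) := by
  intro h
  simpa using h 1 le_rfl (by simp)

lemma ballotStrings_finite (n : ℕ) : (ballotStrings n).Finite :=
  (List.finite_length_eq Bool n).subset fun _ hu => hu.1

lemma dyckStrings_subset_ballotStrings (n : ℕ) : dyckStrings n ⊆ ballotStrings n :=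
  fun _ ⟨hl, hu, _⟩ => ⟨hl, hu⟩

lemma ballotStrings_zero : ballotStrings 0 = {[]} := by
  ext u
  simp +contextual [ballotStrings, isBallot_nil]

lemma ballotStrings_succ (n : ℕ) :
    ballotStrings (n + 1) = (· ++ [false]) '' ballotStrings n ∪
      (· ++ [true]) '' (ballotStrings n \ dyckStrings n) := by
  ext u
  rcases u.eq_nil_or_concat with rfl | ⟨v, b, rfl⟩
  · simp [ballotStrings]
  · cases b
    · simp [ballotStrings, isBallot_append_false]
    · simp only [ballotStrings, dyckStrings, List.concat_eq_append, Set.mem_union, Set.mem_image,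
        Set.mem_ofPred_eq, List.append_singleton_inj, isBallot_append_true]
      grind [IsBallot.count_le]

lemma ncard_ballotStrings_succ_add_ncard_dyckStrings (n : ℕ) :
    (ballotStrings (n + 1)).ncard + (dyckStrings n).ncard = 2 * (ballotStrings n).ncard := by
  have hdisj : Disjoint ((· ++ [false]) '' ballotStrings n)
      ((· ++ [true]) '' (ballotStrings n \ dyckStrings n)) := by
    rw [Set.disjoint_left]
    rintro _ ⟨v, -, rfl⟩ ⟨w, -, h⟩
    simp at h
  rw [ballotStrings_succ, Set.ncard_union_eq hdisj ((ballotStrings_finite n).image _)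
      (((ballotStrings_finite n).sdiff).image _),
    Set.ncard_image_of_injective _ (List.append_left_injective _),
    Set.ncard_image_of_injective _ (List.append_left_injective _),
    ← Set.ncard_sdiff_add_ncard_of_subset (dyckStrings_subset_ballotStrings n)
      (ballotStrings_finite n)]
  ring

open DyckStep in
def boolEquivDyckStep : Bool ≃ DyckStep where
  toFun b := cond b D U
  invFun s := s == D
  left_inv b := by cases b <;> rfl
  right_inv s := by cases s <;> rfl

lemma count_map_boolEquivDyckStep (l : List Bool) (b : Bool) :
    (l.map boolEquivDyckStep).count (boolEquivDyckStep b) = l.count b :=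
  List.count_map_of_injective _ _ boolEquivDyckStep.injective b

def DyckWord.ofBallot (u : List Bool) (hu : IsBallot u) (hc : u.count true = u.count false) :
    DyckWord where
  toList := u.map boolEquivDyckStep
  count_U_eq_count_D := by
    rw [← count_map_boolEquivDyckStep u false, ← count_map_boolEquivDyckStep u true] at hc
    exact hc.symm
  count_D_le_count_U i := by
    have := hu i
    rw [← count_map_boolEquivDyckStep _ false, ← count_map_boolEquivDyckStep _ true,
      List.map_take] at this
    exact this

lemma count_map_boolEquivDyckStep_symm (l : List DyckStep) (b : Bool) :
    (l.map boolEquivDyckStep.symm).count b = l.count (boolEquivDyckStep b) := by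
  simpa using
    List.count_map_of_injective l _ boolEquivDyckStep.symm.injective (boolEquivDyckStep b)

lemma dyckStrings_two_mul (k : ℕ) :
    dyckStrings (2 * k) =
      (fun p : DyckWord => p.toList.map boolEquivDyckStep.symm) '' {p | p.semilength = k} := by
  ext u
  constructor
  · rintro ⟨hl, hu, hc⟩
    refine ⟨DyckWord.ofBallot u hu hc, ?_, by simp [DyckWord.ofBallot]⟩
    have := u.count_true_add_count_false
    change (u.map boolEquivDyckStep).count (boolEquivDyckStep false) = k
    rw [count_map_boolEquivDyckStep]
    omega
  · rintro ⟨p, hp, rfl⟩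
    refine ⟨?_, fun i => ?_, ?_⟩
    · rw [List.length_map, ← p.two_mul_semilength_eq_length, show p.semilength = k from hp]
    · rw [← List.map_take, count_map_boolEquivDyckStep_symm, count_map_boolEquivDyckStep_symm]
      exact p.count_D_le_count_U i
    · rw [count_map_boolEquivDyckStep_symm, count_map_boolEquivDyckStep_symm]
      exact p.count_U_eq_count_D.symm

lemma ncard_dyckStrings_two_mul (k : ℕ) : (dyckStrings (2 * k)).ncard = catalan k := by
  have hinj : Function.Injective fun p : DyckWord => p.toList.map boolEquivDyckStep.symm :=
    (List.map_injective_iff.2 boolEquivDyckStep.symm.injective).comp fun _ _ => DyckWord.ext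
  rw [dyckStrings_two_mul, Set.ncard_image_of_injective _ hinj,
    ← Nat.card_coe_set_eq, Set.coe_ofPred, Nat.card_eq_fintype_card,
    DyckWord.card_dyckWord_semilength_eq_catalan]

lemma dyckStrings_two_mul_add_one (k : ℕ) : dyckStrings (2 * k + 1) = ∅ := by
  refine Set.eq_empty_of_forall_notMem fun u ⟨hl, _, hc⟩ => ?_
  have := u.count_true_add_count_false
  omega

lemma choose_two_mul_add_one_add_catalan (k : ℕ) :
    (2 * k + 1).choose k + catalan k = 2 * (2 * k).choose k := by
  have hcat := succ_mul_catalan_eq_centralBinom k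
  have hpascal := Nat.choose_mul_succ_eq (2 * k) k
  rw [Nat.centralBinom_eq_two_mul_choose] at hcat
  rw [show 2 * k + 1 - k = k + 1 by omega] at hpascal
  refine Nat.eq_of_mul_eq_mul_left k.succ_pos ?_
  nlinarith

lemma choose_two_mul_add_two_succ (k : ℕ) :
    (2 * k + 2).choose (k + 1) = 2 * (2 * k + 1).choose k := by
  rw [Nat.choose_succ_succ', Nat.choose_symm_half]
  ring

lemma ncard_ballotStrings_two_mul_add_one {k : ℕ}
    (h : (ballotStrings (2 * k)).ncard = (2 * k).choose k) :
    (ballotStrings (2 * k + 1)).ncard = (2 * k + 1).choose k := by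
  have hrec := ncard_ballotStrings_succ_add_ncard_dyckStrings (2 * k)
  rw [ncard_dyckStrings_two_mul, h] at hrec
  have := choose_two_mul_add_one_add_catalan k
  omega

lemma ncard_ballotStrings_two_mul (k : ℕ) :
    (ballotStrings (2 * k)).ncard = (2 * k).choose k := by
  induction k with
  | zero => simp [ballotStrings_zero]
  | succ k ih =>
    have hrec := ncard_ballotStrings_succ_add_ncard_dyckStrings (2 * k + 1)
    rw [dyckStrings_two_mul_add_one, Set.ncard_empty, ncard_ballotStrings_two_mul_add_one ih,
      ← choose_two_mul_add_two_succ] at hrec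
    simpa [Nat.mul_succ] using hrec

lemma catalanBertrand_length_succ (n : ℕ) :
    {u : List Bool | u.length = n + 1 ∧ CatalanBertrand u} =
      (false :: ·) '' ballotStrings n := by
  ext u
  rcases u with _ | ⟨_ | _, v⟩ <;>
    simp [ballotStrings, catalanBertrand_cons_false, not_catalanBertrand_cons_true]

theorem card_catalanBertrand (i : ℕ) :
    (Odd i → {u : List Bool | u.length = i ∧ CatalanBertrand u}.ncard =
        (i - 1).choose ((i - 1) / 2)) ∧
    (Even i → 2 ≤ i → {u : List Bool | u.length = i ∧ CatalanBertrand u}.ncard =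
        i.choose (i / 2) / 2) := by
  constructor
  · rintro ⟨k, rfl⟩
    rw [catalanBertrand_length_succ, Set.ncard_image_of_injective _ List.cons_injective,
      ncard_ballotStrings_two_mul]
    simp
  · rintro ⟨m, rfl⟩ hm
    obtain ⟨k, rfl⟩ : ∃ k, m = k + 1 := ⟨m - 1, by omega⟩
    rw [show k + 1 + (k + 1) = 2 * k + 1 + 1 by ring, catalanBertrand_length_succ,
      Set.ncard_image_of_injective _ List.cons_injective,
      ncard_ballotStrings_two_mul_add_one (ncard_ballotStrings_two_mul k),
      show (2 * k + 1 + 1) / 2 = k + 1 by omega, choose_two_mul_add_two_succ]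
    simp
end

section
/- The number of Catalan-Bertrand strings of length i is at least 2^{i-1} / sqrt(π(⌊i/2⌋ + 1)). -/
lemma key_analytic (n : ℕ) :
    (4 : ℝ) ^ n ≤ n.centralBinom * Real.sqrt (Real.pi * (n + 1)) := by
  have hC : 0 < (n.centralBinom : ℝ) := by exact_mod_cast n.centralBinom_pos
  have hfacN : n.centralBinom * (n.factorial * n.factorial) = (2 * n).factorial := by
    have h := Nat.choose_mul_factorial_mul_factorial (show n ≤ 2 * n by omega)
    rw [show 2 * n - n = n by omega] at h
    rw [Nat.centralBinom, ← Nat.mul_assoc]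
    exact h
  -- W n = 16^n / (C^2 * (2n+1))
  have hW := Real.Wallis.W_eq_factorial_ratio n
  have hWle := Real.Wallis.W_le n
  have hkey : (16 : ℝ) ^ n ≤ (n.centralBinom : ℝ) ^ 2 * (Real.pi * (n + 1)) := by
    have hfacR : ((2 * n).factorial : ℝ) ^ 2 = (n.centralBinom : ℝ) ^ 2 * (n.factorial : ℝ) ^ 4 := by
      have : ((2 * n).factorial : ℝ) = n.centralBinom * ((n.factorial : ℝ) * n.factorial) := by
        exact_mod_cast congrArg (Nat.cast : ℕ → ℝ) hfacN.symm
      rw [this]; ring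
    have hfpos : (0 : ℝ) < (n.factorial : ℝ) := by exact_mod_cast n.factorial_pos
    have h2n1 : (0 : ℝ) < 2 * (n : ℝ) + 1 := by positivity
    have hWval : Real.Wallis.W n = 16 ^ n / ((n.centralBinom : ℝ) ^ 2 * (2 * n + 1)) := by
      rw [hW, hfacR]
      rw [show (2 : ℝ) ^ (4 * n) = 16 ^ n by rw [pow_mul]; norm_num]
      field_simp
    rw [hWval] at hWle
    have h16 : (16 : ℝ) ^ n ≤ Real.pi / 2 * ((n.centralBinom : ℝ) ^ 2 * (2 * n + 1)) := by
      rw [div_le_iff₀ (by positivity)] at hWle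
      linarith
    have : Real.pi / 2 * ((n.centralBinom : ℝ) ^ 2 * (2 * n + 1)) ≤
        (n.centralBinom : ℝ) ^ 2 * (Real.pi * (n + 1)) := by
      have hpi := Real.pi_pos
      nlinarith [sq_nonneg ((n.centralBinom : ℝ))]
    linarith
  -- take square roots
  have h1 : (4 : ℝ) ^ n = Real.sqrt ((16 : ℝ) ^ n) := by
    rw [show (16:ℝ)^n = ((4:ℝ)^n)^2 by rw [← pow_mul, mul_comm n 2, pow_mul]; norm_num, Real.sqrt_sq (by positivity)]
  rw [h1]
  calc Real.sqrt ((16:ℝ)^n) ≤ Real.sqrt ((n.centralBinom : ℝ) ^ 2 * (Real.pi * (n+1))) :=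
        Real.sqrt_le_sqrt hkey
    _ = (n.centralBinom : ℝ) * Real.sqrt (Real.pi * (n+1)) := by
        rw [Real.sqrt_mul (by positivity), Real.sqrt_sq hC.le]

/-- Integer-indexed binomial coefficient, zero for negative index. -/
def ch (m : ℕ) (j : ℤ) : ℕ := if 0 ≤ j then m.choose j.toNat else 0

lemma ch_succ (m : ℕ) (j : ℤ) : ch (m + 1) j = ch m j + ch m (j - 1) := by
  unfold ch
  rcases lt_trichotomy j 0 with hj | hj | hj
  · rw [if_neg (by omega), if_neg (by omega), if_neg (by omega)]
  · subst hj; norm_num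
  · rw [if_pos (by omega), if_pos (by omega), if_pos (by omega)]
    obtain ⟨k, hk⟩ : ∃ k : ℕ, j = (k : ℤ) + 1 := ⟨(j - 1).toNat, by omega⟩
    subst hk
    have e1 : ((k : ℤ) + 1).toNat = k + 1 := by omega
    have e2 : ((k : ℤ) + 1 - 1).toNat = k := by omega
    rw [e1, e2, Nat.choose_succ_succ, Nat.succ_eq_add_one]
    omega

lemma ch_zero (j : ℤ) : ch 0 j = if j = 0 then 1 else 0 := by
  unfold ch
  rcases lt_trichotomy j 0 with hj | hj | hj
  · rw [if_neg (by omega), if_neg (by omega)]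
  · subst hj; norm_num
  · rw [if_pos (by omega), if_neg (by omega)]
    obtain ⟨k, hk⟩ : ∃ k : ℕ, j = (k : ℤ) + 1 := ⟨(j - 1).toNat, by omega⟩
    subst hk
    rw [show ((k : ℤ) + 1).toNat = k + 1 by omega]
    simp

lemma ch_natCast (m k : ℕ) : ch m (k : ℤ) = m.choose k := by
  unfold ch; rw [if_pos (by positivity), Int.toNat_natCast]

/-- `Ok h u`: reading `u`, starting with excess `h`, the excess (counting `false` as +1,
`true` as −1) stays ≥ 1 after every step. -/
def Ok : ℕ → List Bool → Prop
  | _, [] => True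
  | h, (false :: v) => Ok (h + 1) v
  | h, (true :: v) => 2 ≤ h ∧ Ok (h - 1) v

/-- Finset of strings of length `m` that are `Ok h`. -/
def F : ℕ → ℕ → Finset (List Bool)
  | _, 0 => {[]}
  | h, (m + 1) =>
      ((F (h + 1) m).image (List.cons false)) ∪
        (if 2 ≤ h then (F (h - 1) m).image (List.cons true) else ∅)

lemma mem_F : ∀ (m : ℕ) (h : ℕ) (u : List Bool), u ∈ F h m ↔ u.length = m ∧ Ok h u := by
  intro m
  induction m with
  | zero =>
    intro h u
    simp only [F, Finset.mem_singleton]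
    constructor
    · rintro rfl; exact ⟨rfl, trivial⟩
    · rintro ⟨hl, _⟩; exact List.length_eq_zero_iff.mp hl
  | succ m ih =>
    intro h u
    simp only [F, Finset.mem_union, Finset.mem_image]
    constructor
    · rintro (⟨v, hv, rfl⟩ | hmem)
      · exact ⟨by simp [(ih _ v).mp hv |>.1], (ih _ v).mp hv |>.2⟩
      · by_cases h2 : 2 ≤ h
        · rw [if_pos h2, Finset.mem_image] at hmem
          obtain ⟨v, hv, rfl⟩ := hmem
          exact ⟨by simp [(ih _ v).mp hv |>.1], h2, (ih _ v).mp hv |>.2⟩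
        · rw [if_neg h2] at hmem; exact absurd hmem (Finset.notMem_empty _)
    · rintro ⟨hl, hok⟩
      match u with
      | [] => simp at hl
      | false :: v =>
        exact Or.inl ⟨v, (ih _ v).mpr ⟨by simpa using hl, hok⟩, rfl⟩
      | true :: v =>
        obtain ⟨h2, hok'⟩ := hok
        refine Or.inr ?_
        rw [if_pos h2, Finset.mem_image]
        exact ⟨v, (ih _ v).mpr ⟨by simpa using hl, hok'⟩, rfl⟩

lemma Ok_iff : ∀ (u : List Bool) (h : ℕ),
    Ok h u ↔ ∀ k, 1 ≤ k → k ≤ u.length →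
      (u.take k).count true + 1 ≤ h + (u.take k).count false := by
  intro u
  induction u with
  | nil =>
    intro h
    constructor
    · intro _ k h1 h2; simp at h2; omega
    · intro _; trivial
  | cons b v ih =>
    intro h
    have hstep : ∀ j : ℕ,
        (((b :: v).take (j+1)).count true = (v.take j).count true + (if b then 1 else 0)) ∧
        (((b :: v).take (j+1)).count false = (v.take j).count false + (if b then 0 else 1)) := by
      intro j
      simp only [List.take_succ_cons, List.count_cons]
      cases b <;> simp
    cases b
    · simp only [Ok]
      rw [ih (h + 1)]
      constructor
      · intro H k h1 h2
        obtain ⟨j, rfl⟩ : ∃ j, k = j + 1 := ⟨k - 1, by omega⟩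
        obtain ⟨e1, e2⟩ := hstep j
        rw [e1, e2]
        simp only [if_neg (Bool.false_ne_true), ite_false]
        rcases Nat.eq_zero_or_pos j with rfl | hj
        · simp only [List.take_zero, List.count_nil]; omega
        · have := H j (by omega) (by simp at h2; omega)
          omega
      · intro H j h1 h2
        have h3 := H (j + 1) (by omega) (by simp; omega)
        obtain ⟨e1, e2⟩ := hstep j
        rw [e1, e2] at h3
        simp only [if_neg (Bool.false_ne_true), ite_false] at h3
        omega
    · simp only [Ok]
      constructor
      · rintro ⟨h2le, H⟩ k h1 h2
        obtain ⟨h', rfl⟩ : ∃ h', h = h' + 2 := ⟨h - 2, by omega⟩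
        obtain ⟨j, rfl⟩ : ∃ j, k = j + 1 := ⟨k - 1, by omega⟩
        obtain ⟨e1, e2⟩ := hstep j
        rw [e1, e2]
        simp only [ite_true]
        rcases Nat.eq_zero_or_pos j with rfl | hj
        · simp only [List.take_zero, List.count_nil]; omega
        · have h4 := (ih (h' + 2 - 1)).mp H j (by omega) (by simp at h2; omega)
          omega
      · intro H
        have h2le : 2 ≤ h := by
          have h3 := H 1 le_rfl (by simp)
          obtain ⟨e1, e2⟩ := hstep 0
          rw [e1, e2] at h3
          simp at h3
          omega
        obtain ⟨h', rfl⟩ : ∃ h', h = h' + 2 := ⟨h - 2, by omega⟩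
        refine ⟨h2le, (ih (h' + 2 - 1)).mpr ?_⟩
        intro j h1 h2
        have h3 := H (j + 1) (by omega) (by simp; omega)
        obtain ⟨e1, e2⟩ := hstep j
        rw [e1, e2] at h3
        simp only [ite_true] at h3
        omega

lemma CB_iff (u : List Bool) : CatalanBertrand u ↔ Ok 0 u := by
  rw [Ok_iff]
  unfold CatalanBertrand
  constructor
  · intro H k h1 h2; have := H k h1 h2; omega
  · intro H k h1 h2; have := H k h1 h2; omega

lemma card_F_zero (h : ℕ) : (F h 0).card = 1 := by simp [F]

lemma card_F_succ_low (h m : ℕ) (hh : h < 2) : (F h (m + 1)).card = (F (h + 1) m).card := by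
  rw [F, if_neg (by omega)]
  rw [Finset.union_empty, Finset.card_image_of_injective _ (List.cons_injective)]

lemma card_F_succ_high (h m : ℕ) :
    (F (h + 2) (m + 1)).card = (F (h + 3) m).card + (F (h + 1) m).card := by
  rw [F, if_pos (by omega)]
  rw [Finset.card_union_of_disjoint, Finset.card_image_of_injective _ (List.cons_injective),
    Finset.card_image_of_injective _ (List.cons_injective)]
  · norm_num
  · rw [Finset.disjoint_left]
    rintro a ha hb
    rw [Finset.mem_image] at ha hb
    obtain ⟨v, _, rfl⟩ := ha
    obtain ⟨w, _, hw⟩ := hb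
    simp at hw

lemma sum_helper (A : ℕ → ℕ) (n : ℕ) :
    ∑ t ∈ Finset.range (n + 2), (A t + A (t + 1)) =
      ∑ t ∈ Finset.range (n + 3), A t + ∑ t ∈ Finset.range (n + 1), A (t + 1) := by
  rw [Finset.sum_add_distrib, Finset.sum_range_succ (fun t => A t) (n + 2),
    Finset.sum_range_succ (fun t => A (t + 1)) (n + 1)]
  have e : n + 1 + 1 = n + 2 := by omega
  rw [e]
  omega

lemma card_F_closed : ∀ (m h : ℕ),
    (F (h + 1) m).card = ∑ t ∈ Finset.range (h + 1), ch m ((m + h + 1 : ℤ) / 2 - t) := by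
  intro m
  induction m with
  | zero =>
    intro h
    rw [card_F_zero]
    have hc : ∀ t ∈ Finset.range (h + 1),
        ch 0 ((((0 : ℕ) : ℤ) + h + 1) / 2 - t) = if t = (h + 1) / 2 then 1 else 0 := by
      intro t _
      rw [ch_zero]
      have : ((((0 : ℕ) : ℤ) + h + 1) / 2 - t = 0) ↔ (t = (h + 1) / 2) := by omega
      rw [if_congr this rfl rfl]
    rw [Finset.sum_congr rfl hc,
      Finset.sum_ite_eq' (Finset.range (h + 1)) ((h + 1) / 2) (fun _ => 1),
      if_pos (by rw [Finset.mem_range]; omega)]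
  | succ m ih =>
    intro h
    match h with
    | 0 =>
      rw [card_F_succ_low 1 m (by omega), ih 1]
      simp only [Finset.sum_range_succ, Finset.sum_range_zero]
      have e0 : ((m : ℤ) + 1 + 0 + 1) / 2 - (0 : ℕ) = ((m : ℤ) + 1 + 1) / 2 := by push_cast; omega
      have e1 : ((m : ℤ) + 1 + 1) / 2 - (0 : ℕ) = ((m : ℤ) + 1 + 1) / 2 := by push_cast; omega
      have e2 : ((m : ℤ) + 1 + 1) / 2 - (1 : ℕ) = ((m : ℤ) + 1 + 1) / 2 - 1 := by push_cast; omega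
      push_cast
      rw [show ((m : ℤ) + 1 + 0 + 1) / 2 - 0 = ((m : ℤ) + 1 + 1) / 2 by omega,
        show ((m : ℤ) + 1 + 1) / 2 - 0 = ((m : ℤ) + 1 + 1) / 2 by omega, ch_succ]
      omega
    | h' + 1 =>
      have key : ∀ (a : ℕ) (x y : ℤ), x = y → ch a x = ch a y := fun a x y h => by rw [h]
      calc (F (h' + 1 + 1) (m + 1)).card
          = (F (h' + 3) m).card + (F (h' + 1) m).card := card_F_succ_high h' m
        _ = (∑ t ∈ Finset.range (h' + 3), ch m (((m : ℤ) + h' + 3) / 2 - t))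
              + ∑ t ∈ Finset.range (h' + 1), ch m (((m : ℤ) + h' + 3) / 2 - ((t : ℤ) + 1)) := by
            rw [ih (h' + 2), ih h']
            have p1 : ∑ t ∈ Finset.range (h' + 2 + 1), ch m ((m + (h' + 2 : ℕ) + 1 : ℤ) / 2 - t)
                = ∑ t ∈ Finset.range (h' + 3), ch m (((m : ℤ) + h' + 3) / 2 - t) := by
              refine Finset.sum_congr (by norm_num) (fun t _ => key m _ _ ?_)
              push_cast
              omega
            have p2 : ∑ t ∈ Finset.range (h' + 1), ch m ((m + h' + 1 : ℤ) / 2 - t)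
                = ∑ t ∈ Finset.range (h' + 1), ch m (((m : ℤ) + h' + 3) / 2 - ((t : ℤ) + 1)) := by
              refine Finset.sum_congr rfl (fun t _ => key m _ _ ?_)
              push_cast
              omega
            rw [p1, p2]
        _ = ∑ t ∈ Finset.range (h' + 2),
              (ch m (((m : ℤ) + h' + 3) / 2 - t) + ch m (((m : ℤ) + h' + 3) / 2 - ((t : ℤ) + 1))) := by
            have := (sum_helper (fun t : ℕ => ch m (((m : ℤ) + h' + 3) / 2 - t)) h').symm
            simp only [Nat.cast_add, Nat.cast_one] at this ⊢
            exact this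
        _ = ∑ t ∈ Finset.range (h' + 1 + 1),
              ch (m + 1) ((((m + 1 : ℕ) : ℤ) + ((h' + 1 : ℕ) : ℤ) + 1) / 2 - t) := by
            refine Finset.sum_congr rfl (fun t _ => ?_)
            rw [ch_succ]
            refine congrArg₂ (· + ·) (key m _ _ ?_) (key m _ _ ?_)
            · push_cast; omega
            · push_cast; omega

lemma set_eq_F (i : ℕ) :
    {u : List Bool | u.length = i ∧ CatalanBertrand u} = ↑(F 0 i) := by
  ext u
  simp only [Set.mem_setOf_eq, Finset.coe_sort_coe, Finset.mem_coe, mem_F, CB_iff]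

lemma ncard_eq (i : ℕ) :
    ({u : List Bool | u.length = i ∧ CatalanBertrand u}).ncard = (F 0 i).card := by
  rw [set_eq_F, Set.ncard_coe_finset]

lemma count_succ (m : ℕ) : (F 0 (m + 1)).card = m.choose ((m + 1) / 2) := by
  rw [card_F_succ_low 0 m (by omega), card_F_closed m 0, Finset.sum_range_one]
  have e : ((m : ℤ) + ((0 : ℕ) : ℤ) + 1) / 2 - ((0 : ℕ) : ℤ) = (((m + 1) / 2 : ℕ) : ℤ) := by
    push_cast; omega
  rw [e, ch_natCast]

theorem card_catalanBertrand_lower_bound (i : ℕ) :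
    (2 : ℝ) ^ (i - 1) / Real.sqrt (Real.pi * (i / 2 + 1 : ℕ)) ≤
      ({u : List Bool | u.length = i ∧ CatalanBertrand u}.ncard : ℝ) := by
  have hpi := Real.pi_pos
  match i with
  | 0 =>
    rw [ncard_eq 0, card_F_zero]
    have hs : (1 : ℝ) ≤ Real.sqrt (Real.pi * ((0 / 2 + 1 : ℕ) : ℝ)) := by
      rw [show ((0 / 2 + 1 : ℕ) : ℝ) = 1 by norm_num, mul_one]
      rw [show (1 : ℝ) = Real.sqrt 1 by rw [Real.sqrt_one]]
      exact Real.sqrt_le_sqrt (by linarith [Real.pi_gt_three])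
    rw [show (0 : ℕ) - 1 = 0 by rfl, pow_zero]
    rw [Nat.cast_one]
    rw [div_le_one (by linarith)]
    rw [mul_one]
    rw [show (1 : ℝ) = Real.sqrt 1 by rw [Real.sqrt_one]]
    exact Real.sqrt_le_sqrt (by linarith [Real.pi_gt_three])
  | m + 1 =>
    rw [ncard_eq (m + 1), count_succ m]
    have hsPos : (0 : ℝ) < Real.sqrt (Real.pi * (((m + 1) / 2 + 1 : ℕ) : ℝ)) := by
      apply Real.sqrt_pos.mpr
      have : (0 : ℝ) < (((m + 1) / 2 + 1 : ℕ) : ℝ) := by positivity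
      positivity
    rw [div_le_iff₀ hsPos]
    rw [show m + 1 - 1 = m by omega]
    rcases Nat.even_or_odd m with ⟨n, rfl⟩ | ⟨n, rfl⟩
    · -- m = n + n
      have hkey := key_analytic n
      have e1 : (n + n + 1) / 2 + 1 = n + 1 := by omega
      have e2 : (n + n + 1) / 2 = n := by omega
      rw [e1, e2]
      have e3 : (n + n).choose n = n.centralBinom := by
        rw [Nat.centralBinom]; congr 1; omega
      rw [e3]
      have e4 : (2 : ℝ) ^ (n + n) = 4 ^ n := by
        rw [show n + n = 2 * n by omega, pow_mul]; norm_num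
      rw [e4]
      have e5 : ((n + 1 : ℕ) : ℝ) = (n : ℝ) + 1 := by push_cast; ring
      rw [e5]
      exact hkey
    · -- m = 2n + 1
      have hkey := key_analytic (n + 1)
      have e1 : (2 * n + 1 + 1) / 2 + 1 = n + 2 := by omega
      have e2 : (2 * n + 1 + 1) / 2 = n + 1 := by omega
      rw [e1, e2]
      have hdouble : (n + 1).centralBinom = 2 * ((2 * n + 1).choose (n + 1)) := by
        rw [Nat.centralBinom, show 2 * (n + 1) = (2 * n + 1) + 1 by omega,
          Nat.choose_succ_succ]
        have : (2 * n + 1).choose n = (2 * n + 1).choose (n + 1) := by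
          rw [← Nat.choose_symm (show n + 1 ≤ 2 * n + 1 by omega)]
          congr 1
          omega
        simp only [Nat.succ_eq_add_one]
        omega
      have e5 : (((n : ℕ) + 2 : ℕ) : ℝ) = ((n : ℕ) + 1 : ℝ) + 1 := by push_cast; ring
      rw [e5]
      have h4 : (4 : ℝ) ^ (n + 1) = 2 * 2 ^ (2 * n + 1) := by
        rw [show (4 : ℝ) = 2 ^ 2 by norm_num, ← pow_mul]
        rw [show 2 * (n + 1) = (2 * n + 1) + 1 by omega, pow_succ]
        ring
      have hcb : ((n + 1).centralBinom : ℝ) = 2 * ((2 * n + 1).choose (n + 1) : ℝ) := by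
        exact_mod_cast congrArg (Nat.cast : ℕ → ℝ) hdouble
      rw [h4, hcb] at hkey
      have hcast : ((n : ℝ) + 1 + 1) = ((n + 1 : ℕ) : ℝ) + 1 := by push_cast; ring
      rw [hcast]
      nlinarith [Real.sqrt_nonneg (Real.pi * (((n + 1 : ℕ) : ℝ) + 1)),
        (by positivity : (0:ℝ) < (2:ℝ) ^ (2 * n + 1))]
end

section
/- For an alphabet of size q and length r, the number of Lyndon words of length r over the alphabet satisfies q^r/r - q^{r/2} ≤ |L_r(q)| ≤ q^r/r + q^{r/2}. -/
/-!
The map `(u, k) ↦ u.rotate k`, on Lyndon words `u` of length `r` and `k < r`, is injective,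
because a Lyndon word is the strict minimum of its rotation class; and its image contains every
word fixed by no nontrivial rotation, because the least rotation of such a word is Lyndon.
Hence `r |L| ≤ q ^ r ≤ r |L| + #periodic`. A word fixed by a nontrivial rotation is fixed by one
of some amount `k ≤ r / 2`, and is then determined by `k` and its first `r / 2` letters, so there
are at most `(r / 2) q ^ (r / 2) ≤ r √(q ^ r)` such words.
-/

/-- A Lyndon word: strictly smaller than all of its nontrivial cyclic rotations. -/
def IsLyndon {q : ℕ} (w : List (Fin q)) : Prop :=
  ∀ k, 0 < k → k < w.length → w < w.rotate k

open Finset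

namespace List

variable {α : Type*}

def IsPeriodic (w : List α) : Prop :=
  ∃ k, 0 < k ∧ k < w.length ∧ w.rotate k = w

theorem rotate_sub_eq_self_of_rotate_eq {w : List α} {a b : ℕ} (hab : a ≤ b)
    (h : w.rotate a = w.rotate b) : w.rotate (b - a) = w :=
  (rotate_eq_rotate.mp <| h.trans <| by rw [rotate_rotate, Nat.sub_add_cancel hab]).symm

theorem IsPeriodic.of_rotate {w : List α} {m : ℕ} (h : (w.rotate m).IsPeriodic) :
    w.IsPeriodic := by
  obtain ⟨k, hk0, hk, hrot⟩ := h
  refine ⟨k, hk0, by simpa using hk, ?_⟩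
  rwa [rotate_rotate, add_comm, ← rotate_rotate, rotate_eq_rotate] at hrot

theorem IsRotated.exists_rotate_lt {u w : List α} (h : u ~r w) (hu : 0 < u.length) :
    ∃ k < u.length, u.rotate k = w := by
  obtain ⟨n, rfl⟩ := h
  exact ⟨n % u.length, Nat.mod_lt _ hu, rotate_mod u n⟩

theorem getElem_eq_getElem_sub_of_rotate_eq_self {w : List α} {k i : ℕ} (hw : w.rotate k = w)
    (hki : k ≤ i) (hi : i < w.length) : w[i] = w[i - k] := by
  have h := getElem_rotate w k (i - k) (by simp; omega)
  simp only [hw, Nat.sub_add_cancel hki, Nat.mod_eq_of_lt hi] at h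
  exact h.symm

theorem eq_of_rotate_eq_self_of_take_eq {w w' : List α} {k n : ℕ} (hk : 0 < k) (hkn : k ≤ n)
    (hlen : w.length = w'.length) (hw : w.rotate k = w) (hw' : w'.rotate k = w')
    (htake : w.take n = w'.take n) : w = w' := by
  refine ext_getElem hlen fun i => ?_
  induction i using Nat.strong_induction_on with
  | _ i ih =>
    intro hi hi'
    by_cases hin : i < n
    · have hi_take : i < (w.take n).length := by simp; omega
      simpa [getElem_take] using getElem_of_eq htake hi_take
    · rw [getElem_eq_getElem_sub_of_rotate_eq_self hw (by omega) hi,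
        getElem_eq_getElem_sub_of_rotate_eq_self hw' (by omega) hi']
      exact ih (i - k) (by omega) _ _

theorem IsPeriodic.exists_le_half {w : List α} (h : w.IsPeriodic) :
    ∃ k, 0 < k ∧ k ≤ w.length / 2 ∧ w.rotate k = w := by
  obtain ⟨k, hk0, hk, hrot⟩ := h
  by_cases hk2 : k ≤ w.length / 2
  · exact ⟨k, hk0, hk2, hrot⟩
  · refine ⟨w.length - k, by omega, by omega, ?_⟩
    calc w.rotate (w.length - k) = (w.rotate k).rotate (w.length - k) := by rw [hrot]
      _ = w := by rw [rotate_rotate, Nat.add_sub_cancel' hk.le, rotate_length]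

theorem exists_isRotated_forall_le [LinearOrder α] (w : List α) :
    ∃ u, u ~r w ∧ ∀ v, v ~r w → u ≤ v := by
  classical
  let s := w.cyclicPermutations.toFinset
  have hs : s.Nonempty := ⟨w, by simp [s, IsRotated.refl]⟩
  refine ⟨s.min' hs, ?_, fun v hv => s.min'_le v ?_⟩
  · simpa [s, mem_cyclicPermutations_iff] using s.min'_mem hs
  · simpa [s, mem_cyclicPermutations_iff] using hv

end List

namespace IsLyndon

variable {q : ℕ} {u v : List (Fin q)}

theorem rotate_ne_self (hu : IsLyndon u) {k : ℕ} (hk0 : 0 < k) (hk : k < u.length) :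
    u.rotate k ≠ u :=
  fun h => (hu k hk0 hk).ne h.symm

theorem le_of_isRotated (hu : IsLyndon u) (h : u ~r v) : u ≤ v := by
  obtain ⟨n, rfl⟩ := h
  rcases u.length.eq_zero_or_pos with hl | hl
  · simp [List.length_eq_zero_iff.mp hl]
  rw [← List.rotate_mod]
  rcases (n % u.length).eq_zero_or_pos with h0 | h0
  · rw [h0, List.rotate_zero]
  · exact (hu _ h0 (Nat.mod_lt _ hl)).le

theorem eq_of_isRotated (hu : IsLyndon u) (hv : IsLyndon v) (h : u ~r v) : u = v :=
  le_antisymm (hu.le_of_isRotated h) (hv.le_of_isRotated h.symm)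

theorem rotate_inj (hu : IsLyndon u) {j k : ℕ} (hj : j < u.length) (hk : k < u.length)
    (h : u.rotate j = u.rotate k) : j = k := by
  wlog hjk : j ≤ k generalizing j k
  · exact (this hk hj h.symm (by omega)).symm
  by_contra hne
  exact hu.rotate_ne_self (k := k - j) (by omega) (by omega)
    (List.rotate_sub_eq_self_of_rotate_eq hjk h)

theorem rotate_eq_rotate_iff (hu : IsLyndon u) (hv : IsLyndon v) {j k : ℕ} (hj : j < u.length)
    (hk : k < v.length) : u.rotate j = v.rotate k ↔ u = v ∧ j = k := by
  refine ⟨fun h => ?_, fun ⟨huv, hjk⟩ => huv ▸ hjk ▸ rfl⟩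
  have huv : u = v := hu.eq_of_isRotated hv <|
    (List.IsRotated.forall u j).symm.trans (h ▸ List.IsRotated.forall v k)
  subst huv
  exact ⟨rfl, hu.rotate_inj hj hk h⟩

end IsLyndon

theorem isLyndon_of_forall_le_rotate {q : ℕ} {u : List (Fin q)} (hu : ¬u.IsPeriodic)
    (hmin : ∀ k, u ≤ u.rotate k) : IsLyndon u :=
  fun k hk0 hk => (hmin k).lt_of_ne fun h => hu ⟨k, hk0, hk, h.symm⟩

theorem exists_isLyndon_isRotated {q : ℕ} {w : List (Fin q)} (hw : ¬w.IsPeriodic) :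
    ∃ u, IsLyndon u ∧ u ~r w := by
  obtain ⟨u, huw, hmin⟩ := List.exists_isRotated_forall_le w
  refine ⟨u, isLyndon_of_forall_le_rotate ?_ fun k =>
    hmin _ ((List.IsRotated.forall u k).trans huw), huw⟩
  obtain ⟨m, rfl⟩ := huw.symm
  exact fun h => hw h.of_rotate

section Counting

variable (α : Type*) [Fintype α]

def words (n : ℕ) : Finset (List α) :=
  (univ : Finset (List.Vector α n)).map ⟨List.Vector.toList, List.Vector.toList_injective⟩

variable {α} in
@[simp]
theorem mem_words {n : ℕ} {w : List α} : w ∈ words α n ↔ w.length = n := by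
  rw [words, mem_map]
  exact ⟨fun ⟨v, _, hv⟩ => hv ▸ v.toList_length, fun h => ⟨⟨w, h⟩, mem_univ _, rfl⟩⟩

theorem card_words (n : ℕ) : #(words α n) = Fintype.card α ^ n := by
  rw [words, card_map, card_univ, card_vector]

open Classical in
noncomputable def periodicWords (n : ℕ) : Finset (List α) :=
  (words α n).filter List.IsPeriodic

theorem card_periodicWords_le (n : ℕ) :
    #(periodicWords α n) ≤ n / 2 * Fintype.card α ^ (n / 2) := by
  classical
  let fixedWords (k : ℕ) := (words α n).filter fun w => w.rotate k = w
  have hcover : periodicWords α n ⊆ (Icc 1 (n / 2)).biUnion fixedWords := by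
    intro w hw
    rw [periodicWords, mem_filter, mem_words] at hw
    obtain ⟨k, hk0, hk, hrot⟩ := hw.2.exists_le_half
    simp only [mem_biUnion, mem_Icc, fixedWords, mem_filter, mem_words]
    exact ⟨k, ⟨hk0, hw.1 ▸ hk⟩, hw.1, hrot⟩
  have hfixed : ∀ k ∈ Icc 1 (n / 2), #(fixedWords k) ≤ Fintype.card α ^ (n / 2) := by
    intro k hk
    rw [mem_Icc] at hk
    rw [← card_words α (n / 2)]
    refine card_le_card_of_injOn (·.take (n / 2)) (fun w hw => ?_) fun w hw w' hw' h => ?_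
    · simp only [fixedWords, coe_filter, Set.mem_ofPred_eq, mem_words] at hw
      simp [hw.1, Nat.div_le_self]
    · simp only [fixedWords, coe_filter, Set.mem_ofPred_eq, mem_words] at hw hw'
      exact List.eq_of_rotate_eq_self_of_take_eq hk.1 hk.2 (hw.1.trans hw'.1.symm) hw.2 hw'.2 h
  calc #(periodicWords α n) ≤ #((Icc 1 (n / 2)).biUnion fixedWords) := card_le_card hcover
    _ ≤ #(Icc 1 (n / 2)) * Fintype.card α ^ (n / 2) := card_biUnion_le_card_mul _ _ _ hfixed
    _ = n / 2 * Fintype.card α ^ (n / 2) := by simp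

end Counting

open Classical in
noncomputable def lyndonWords (q n : ℕ) : Finset (List (Fin q)) :=
  (words (Fin q) n).filter IsLyndon

theorem coe_lyndonWords (q n : ℕ) :
    (lyndonWords q n : Set (List (Fin q))) = {w | w.length = n ∧ IsLyndon w} := by
  ext w
  simp [lyndonWords]

theorem card_lyndonWords_mul_le (q n : ℕ) : #(lyndonWords q n) * n ≤ q ^ n := by
  calc #(lyndonWords q n) * n = #(lyndonWords q n ×ˢ range n) := by simp
    _ ≤ #(words (Fin q) n) := by
      refine card_le_card_of_injOn (fun p => p.1.rotate p.2) ?_ ?_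
      · rintro ⟨u, j⟩ h
        simp_all [lyndonWords]
      · rintro ⟨u, j⟩ hu ⟨v, k⟩ hv h
        simp only [lyndonWords, coe_product, coe_filter, mem_words, coe_range, Set.mem_prod,
          Set.mem_ofPred_eq, Set.mem_Iio] at hu hv
        simp only [Prod.mk.injEq]
        exact (hu.1.2.rotate_eq_rotate_iff hv.1.2 (hu.1.1 ▸ hu.2) (hv.1.1 ▸ hv.2)).1 h
    _ = q ^ n := by simp [card_words]

theorem pow_le_card_lyndonWords_mul_add (q : ℕ) {n : ℕ} (hn : 0 < n) :
    q ^ n ≤ #(lyndonWords q n) * n + #(periodicWords (Fin q) n) := by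
  classical
  have hcover : words (Fin q) n ⊆
      (lyndonWords q n ×ˢ range n).image (fun p => p.1.rotate p.2) ∪ periodicWords (Fin q) n := by
    intro w hw
    rw [mem_words] at hw
    by_cases hper : w.IsPeriodic
    · simp [periodicWords, hw, hper]
    obtain ⟨u, hu, huw⟩ := exists_isLyndon_isRotated hper
    have hlen : u.length = n := huw.perm.length_eq.trans hw
    obtain ⟨k, hk, rfl⟩ := huw.exists_rotate_lt (hlen ▸ hn)
    simp only [mem_union, mem_image, mem_product, lyndonWords, mem_filter, mem_words, mem_range]
    exact Or.inl ⟨(u, k), ⟨⟨hlen, hu⟩, hlen ▸ hk⟩, rfl⟩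
  calc q ^ n = #(words (Fin q) n) := by simp [card_words]
    _ ≤ #((lyndonWords q n ×ˢ range n).image (fun p => p.1.rotate p.2)) +
        #(periodicWords (Fin q) n) := (card_le_card hcover).trans (card_union_le _ _)
    _ ≤ #(lyndonWords q n ×ˢ range n) + #(periodicWords (Fin q) n) := by
      gcongr; exact card_image_le
    _ = #(lyndonWords q n) * n + #(periodicWords (Fin q) n) := by simp

theorem div_two_mul_pow_div_two_le_mul_sqrt (q n : ℕ) :
    ((n / 2 : ℕ) : ℝ) * (q : ℝ) ^ (n / 2) ≤ n * √((q : ℝ) ^ n) := by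
  rcases (n / 2).eq_zero_or_pos with h | h
  · rw [h, Nat.cast_zero, zero_mul]
    positivity
  have hsq : ((q : ℝ) ^ (n / 2)) ^ 2 ≤ (q : ℝ) ^ n := by
    rw [← pow_mul]
    rcases q.eq_zero_or_pos with rfl | hq
    · rw [Nat.cast_zero, zero_pow (by omega)]
      positivity
    · exact pow_le_pow_right₀ (by exact_mod_cast hq) (by omega)
  gcongr
  · exact_mod_cast Nat.div_le_self n 2
  · exact Real.le_sqrt_of_sq_le hsq

theorem lyndon_count_bounds (q r : ℕ) (hr : 1 ≤ r) :
    (q : ℝ) ^ r / r - Real.sqrt ((q : ℝ) ^ r) ≤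
      ({w : List (Fin q) | w.length = r ∧ IsLyndon w}.ncard : ℝ) ∧
    ({w : List (Fin q) | w.length = r ∧ IsLyndon w}.ncard : ℝ) ≤
      (q : ℝ) ^ r / r + Real.sqrt ((q : ℝ) ^ r) := by
  rw [← coe_lyndonWords, Set.ncard_coe_finset]
  have hr' : (0 : ℝ) < r := by exact_mod_cast hr
  have upper : (#(lyndonWords q r) : ℝ) * r ≤ (q : ℝ) ^ r := by
    exact_mod_cast card_lyndonWords_mul_le q r
  have lower : (q : ℝ) ^ r ≤ #(lyndonWords q r) * r + r * √((q : ℝ) ^ r) := by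
    have hcount : (q : ℝ) ^ r ≤ #(lyndonWords q r) * r + #(periodicWords (Fin q) r) := by
      exact_mod_cast pow_le_card_lyndonWords_mul_add q hr
    have hperiodic :
        (#(periodicWords (Fin q) r) : ℝ) ≤ ((r / 2 : ℕ) : ℝ) * (q : ℝ) ^ (r / 2) := by
      exact_mod_cast (card_periodicWords_le (Fin q) r).trans_eq (by rw [Fintype.card_fin])
    linarith [div_two_mul_pow_div_two_le_mul_sqrt q r]
  constructor
  · rw [sub_le_iff_le_add, div_le_iff₀ hr']
    linarith
  · rw [← le_div_iff₀ hr'] at upper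
    linarith [Real.sqrt_nonneg ((q : ℝ) ^ r)]
end

section
/- For any binary string s of length n and any 1 ≤ l ≤ n, the sum of Hamming weights of all substrings of length l equals the sum of Hamming weights of all substrings of length n - l + 1, i.e., w_l(s) = w_{n-l+1}(s). -/
/-- `w_l(s)`: the total number of ones summed over all length-`l` substrings of `s`. -/
def windowWeight (s : List Bool) (l : ℕ) : ℕ :=
  ∑ i ∈ Finset.range (s.length - l + 1), ((s.drop i).take l).count true

theorem windowWeight_symm (n : ℕ) (s : List Bool) (hs : s.length = n)
    (l : ℕ) (hl1 : 1 ≤ l) (hln : l ≤ n) :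
    windowWeight s l = windowWeight s (n - l + 1) := by
  subst hs
  set P : ℕ → ℕ := fun k => (s.take k).count true with hP
  have key : ∀ m, 1 ≤ m → m ≤ s.length →
      windowWeight s m + ∑ i ∈ Finset.range (s.length - m + 1), P i
        = ∑ i ∈ Finset.Ico m (s.length + 1), P i := by
    intro m hm1 hm
    unfold windowWeight
    rw [← Finset.sum_add_distrib]
    have hterm : ∀ i, ((s.drop i).take m).count true + P i = P (i + m) := by
      intro i
      simp only [hP]
      rw [List.take_add, List.count_append, add_comm]
    simp_rw [hterm]
    rw [Finset.sum_Ico_eq_sum_range]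
    have h1 : s.length + 1 - m = s.length - m + 1 := by omega
    rw [h1]
    exact Finset.sum_congr rfl (fun i _ => by rw [add_comm])
  have hl' : 1 ≤ s.length - l + 1 := by omega
  have hl'' : s.length - l + 1 ≤ s.length := by omega
  have k1 := key l hl1 hln
  have k2 := key (s.length - l + 1) hl' hl''
  have h2 : s.length - (s.length - l + 1) + 1 = l := by omega
  rw [h2] at k2
  -- combine: add ∑ range m to each Ico side to get the full sum
  have full : ∀ m, m ≤ s.length + 1 →
      (∑ i ∈ Finset.range m, P i) + ∑ i ∈ Finset.Ico m (s.length + 1), P i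
        = ∑ i ∈ Finset.range (s.length + 1), P i := by
    intro m hm
    simp only [Finset.range_eq_Ico]
    exact Finset.sum_Ico_consecutive _ (Nat.zero_le _) hm
  have f1 := full l (by omega)
  have f2 := full (s.length - l + 1) (by omega)
  omega
end

section
/- For even n and a binary string s of length n, the values w_1(s), ..., w_{n/2}(s) uniquely determine the vector σ(s) = (σ_1(s), ..., σ_{n/2}(s)), where σ_i(s) = s_i + s_{n-i+1}: if two strings s, v of length n satisfy w_l(s) = w_l(v) for all 1 ≤ l ≤ n/2, then σ(s) = σ(v). -/
private lemma count_true_eq_sum (t : List Bool) :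
    t.count true = ∑ j ∈ Finset.range t.length, (t.getD j false).toNat := by
  induction t with
  | nil => simp
  | cons b t ih =>
    rw [List.count_cons, List.length_cons, Finset.sum_range_succ']
    simp [ih, Nat.add_comm]
    cases b <;> simp

/-- middle-slice sum -/
private def midSum (s : List Bool) (j : ℕ) : ℕ :=
  ∑ k ∈ Finset.Ico j (s.length - j), (s.getD k false).toNat

private lemma windowWeight_eq_sum_midSum (s : List Bool) (n l : ℕ) (hs : s.length = n)
    (hl1 : 1 ≤ l) (hl2 : l ≤ n / 2) :
    windowWeight s l = ∑ j ∈ Finset.range l, midSum s j := by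
  have hln : l ≤ n := le_trans hl2 (Nat.div_le_self n 2)
  -- step 1: expand counts
  have step1 : windowWeight s l
      = ∑ i ∈ Finset.range (n - l + 1), ∑ j ∈ Finset.range l, (s.getD (i + j) false).toNat := by
    unfold windowWeight
    rw [hs]
    refine Finset.sum_congr rfl fun i hi => ?_
    rw [count_true_eq_sum]
    have hi' : i ≤ n - l := by
      have := Finset.mem_range.mp hi; omega
    have hlen : ((s.drop i).take l).length = l := by
      simp [hs]; omega
    rw [hlen]
    refine Finset.sum_congr rfl fun j hj => ?_
    have hj' : j < l := Finset.mem_range.mp hj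
    simp [List.getD_eq_getElem?_getD, List.getElem?_take, List.getElem?_drop, hj']
  rw [step1, Finset.sum_comm]
  -- step 2: inner sum as Ico
  have step2 : ∀ j, ∑ i ∈ Finset.range (n - l + 1), (s.getD (i + j) false).toNat
      = ∑ k ∈ Finset.Ico j (n - l + 1 + j), (s.getD k false).toNat := by
    intro j
    rw [Finset.sum_Ico_eq_sum_range]
    simp [Nat.add_comm]
  simp only [step2]
  -- define prefix sums
  set A : ℕ → ℕ := fun m => ∑ k ∈ Finset.range m, (s.getD k false).toNat with hA
  have key : ∀ j b : ℕ, j ≤ b → ∑ k ∈ Finset.Ico j b, (s.getD k false).toNat = A b - A j := by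
    intro j b hjb
    have : A j + ∑ k ∈ Finset.Ico j b, (s.getD k false).toNat = A b := by
      rw [hA]
      simp only [Finset.range_eq_Ico]
      exact Finset.sum_Ico_consecutive _ (Nat.zero_le j) hjb
    omega
  have hAmono : ∀ p q : ℕ, p ≤ q → A p ≤ A q := by
    intro p q hpq
    exact Finset.sum_le_sum_of_subset (Finset.range_subset_range.mpr hpq)
  -- rewrite both sides using A, then compare
  have lhs_eq : ∀ j ∈ Finset.range l,
      ∑ k ∈ Finset.Ico j (n - l + 1 + j), (s.getD k false).toNat = A (n - l + 1 + j) - A j := by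
    intro j hj
    exact key j _ (by omega)
  have rhs_eq : ∀ j ∈ Finset.range l,
      midSum s j = A (n - j) - A j := by
    intro j hj
    have hj' : j < l := Finset.mem_range.mp hj
    unfold midSum
    rw [hs]
    exact key j _ (by omega)
  rw [Finset.sum_congr rfl lhs_eq, Finset.sum_congr rfl rhs_eq]
  -- add back A j termwise
  have e1 : ∀ (f : ℕ → ℕ), (∀ j ∈ Finset.range l, A j ≤ f j) →
      (∑ j ∈ Finset.range l, (f j - A j)) + ∑ j ∈ Finset.range l, A j
        = ∑ j ∈ Finset.range l, f j := by
    intro f hf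
    rw [← Finset.sum_add_distrib]
    exact Finset.sum_congr rfl fun j hj => Nat.sub_add_cancel (hf j hj)
  have e2 := e1 (fun j => A (n - l + 1 + j)) (fun j hj => hAmono _ _ (by omega))
  have e3 := e1 (fun j => A (n - j))
    (fun j hj => hAmono _ _ (by have := Finset.mem_range.mp hj; omega))
  have e4 : ∑ j ∈ Finset.range l, A (n - l + 1 + j) = ∑ j ∈ Finset.range l, A (n - j) := by
    rw [← Finset.sum_range_reflect (fun j => A (n - j)) l]
    refine Finset.sum_congr rfl fun j hj => ?_
    have hj' : j < l := Finset.mem_range.mp hj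
    congr 1
    omega
  omega

theorem windowWeights_determine_sigma (n : ℕ) (hn : n % 2 = 0)
    (s v : List Bool) (hs : s.length = n) (hv : v.length = n)
    (h : ∀ l, 1 ≤ l → l ≤ n / 2 → windowWeight s l = windowWeight v l) :
    ∀ i, i < n / 2 →
      (s.getD i false).toNat + (s.getD (n - 1 - i) false).toNat =
        (v.getD i false).toNat + (v.getD (n - 1 - i) false).toNat := by
  -- partial sums of midSum agree
  have hsum : ∀ l ≤ n / 2,
      ∑ j ∈ Finset.range l, midSum s j = ∑ j ∈ Finset.range l, midSum v j := by
    intro l hl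
    rcases Nat.eq_zero_or_pos l with rfl | hpos
    · simp
    · rw [← windowWeight_eq_sum_midSum s n l hs hpos hl,
          ← windowWeight_eq_sum_midSum v n l hv hpos hl]
      exact h l hpos hl
  -- hence midSum agrees for j < n/2
  have hmid : ∀ j < n / 2, midSum s j = midSum v j := by
    intro j hj
    have h1 := hsum j (by omega)
    have h2 := hsum (j + 1) (by omega)
    rw [Finset.sum_range_succ, Finset.sum_range_succ] at h2
    omega
  -- midSum at n/2 is 0 on both
  have hmid' : ∀ j ≤ n / 2, midSum s j = midSum v j := by
    intro j hj
    rcases lt_or_eq_of_le hj with hlt | rfl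
    · exact hmid j hlt
    · unfold midSum
      rw [hs, hv]
      have : n - n / 2 = n / 2 := by omega
      simp [this]
  -- unfold midSum at i
  intro i hi
  have hstep : ∀ (t : List Bool), t.length = n →
      midSum t i = (t.getD i false).toNat + (t.getD (n - 1 - i) false).toNat + midSum t (i + 1) := by
    intro t ht
    unfold midSum
    rw [ht]
    have h1 : i < n - i := by omega
    have h2 : i + 1 ≤ n - 1 - i := by omega
    rw [Finset.sum_eq_sum_Ico_succ_bot h1]
    have hub : n - i = (n - 1 - i) + 1 := by omega
    rw [hub, Finset.sum_Ico_succ_top h2]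
    have h4 : n - (i + 1) = n - 1 - i := by omega
    rw [h4]
    ring
  have hS := hmid i hi
  have hS' := hmid' (i + 1) (by omega)
  rw [hstep s hs, hstep v hv] at hS
  omega
end

section
/- Let s be a binary string of length n ≥ 2 and let I_s = {i : 1 ≤ i ≤ ℓ+1, j_i - j_{i-1} ≥ 2}, where 0 = j_0 < j_1 < ... < j_ℓ ≤ ⌊n/2⌋ are exactly the indices j in {0,...,⌊n/2⌋} with wt(s_1^j) = wt(s_{n-j+1}^n) (and j_{ℓ+1} = n - j_ℓ). Then the number of binary strings t of length n with M(t) = M(s) equals 2^{|I_s|}. -/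
def Xw (t : List Bool) (k : ℕ) : ℕ := (t.take k).count true

def Yw (t : List Bool) (k : ℕ) : ℕ := (t.drop (t.length - k)).count true

lemma Xw_length (t : List Bool) : Xw t t.length = t.count true := by simp [Xw]

lemma Yw_length (t : List Bool) : Yw t t.length = t.count true := by simp [Yw]

lemma Xw_add_Yw (t : List Bool) (k : ℕ) :
    Xw t (t.length - k) + Yw t k = t.count true := by
  rw [Xw, Yw, ← List.count_append, List.take_append_drop]

lemma Xw_succ (t : List Bool) (k : ℕ) (hk : k < t.length) :
    Xw t (k + 1) = Xw t k + (if t.get ⟨k, hk⟩ = true then 1 else 0) := by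
  rw [Xw, Xw, List.take_succ, List.count_append]
  congr 1
  simp [List.getElem?_eq_getElem hk, List.count_singleton', List.get_eq_getElem]

lemma Xw_step (t : List Bool) (k : ℕ) (hk : k < t.length) :
    Xw t (k + 1) = Xw t k ∨ Xw t (k + 1) = Xw t k + 1 := by
  rw [Xw_succ t k hk]
  split <;> simp

lemma Xw_ext (t u : List Bool) (hl : t.length = u.length)
    (h : ∀ k ≤ t.length, Xw t k = Xw u k) : t = u := by
  apply List.ext_getElem hl
  intro k hk1 hk2
  have h1 := Xw_succ t k hk1
  have h2 := Xw_succ u k hk2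
  have e1 := h k (le_of_lt hk1)
  have e2 := h (k+1) hk1
  simp only [List.get_eq_getElem] at h1 h2
  by_cases b1 : t[k] = true <;> by_cases b2 : u[k] = true <;>
    simp [b1, b2] at h1 h2 ⊢ <;> omega

def strOf (n : ℕ) (x : ℕ → ℕ) : List Bool :=
  List.ofFn (fun p : Fin n => decide (x (p + 1) = x p + 1))

lemma strOf_length (n : ℕ) (x : ℕ → ℕ) : (strOf n x).length = n := by
  simp [strOf]

lemma Xw_strOf (n : ℕ) (x : ℕ → ℕ) (hx0 : x 0 = 0)
    (hsc : ∀ k < n, x (k + 1) = x k ∨ x (k + 1) = x k + 1) :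
    ∀ k ≤ n, Xw (strOf n x) k = x k := by
  intro k hk
  induction k with
  | zero => simp [Xw, hx0]
  | succ m ih =>
    have hm : m < (strOf n x).length := by rw [strOf_length]; omega
    rw [Xw_succ _ m hm, ih (by omega)]
    have hg : (strOf n x).get ⟨m, hm⟩ = decide (x (m + 1) = x m + 1) := by
      simp [strOf]
    rw [hg]
    rcases hsc m (by omega) with h | h <;> simp [h]

lemma pair_eq {α : Type*} {a b c d : α} (h : ({a, b} : Multiset α) = {c, d}) :
    (a = c ∧ b = d) ∨ (a = d ∧ b = c) := by
  rcases Multiset.cons_eq_cons.mp h with ⟨h1, h2⟩ | ⟨hne, cs, h1, h2⟩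
  · exact Or.inl ⟨h1, Multiset.singleton_inj.mp h2⟩
  · rcases (Multiset.singleton_eq_cons_iff _).mp h1 with ⟨hbd, hcs⟩
    subst hcs
    rcases (Multiset.singleton_eq_cons_iff _).mp h2 with ⟨hda, _⟩
    exact Or.inr ⟨hda.symm, hbd⟩

lemma multiset_map_range {α : Type*} (f : ℕ → α) (n : ℕ) :
    (((List.range n).map f : List α) : Multiset α)
      = ∑ i ∈ Finset.range n, ({f i} : Multiset α) := by
  induction n with
  | zero => simp
  | succ m ih =>
    rw [Finset.sum_range_succ, ← ih, List.range_succ, List.map_append,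
      ← Multiset.coe_add]
    congr 1

lemma filter_sum {α ι : Type*} (p : α → Prop) [DecidablePred p] (s : Finset ι)
    (f : ι → Multiset α) : (∑ i ∈ s, f i).filter p = ∑ i ∈ s, (f i).filter p := by
  classical
  induction s using Finset.cons_induction with
  | empty => simp
  | cons a s ha ih => rw [Finset.sum_cons, Finset.sum_cons, Multiset.filter_add, ih]

def pairM (t : List Bool) (k : ℕ) : Multiset (ℕ × ℕ) := {(k, Xw t k), (k, Yw t k)}

lemma psM_eq_sum {n : ℕ} {t : List Bool} (ht : t.length = n) :
    psM t = ∑ a ∈ Finset.range n, pairM t (a + 1) := by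
  have h1 : ((List.range t.length).map (fun j => comp (t.take (j + 1))) : Multiset (ℕ × ℕ))
      = ∑ a ∈ Finset.range n, ({(a + 1, Xw t (a + 1))} : Multiset (ℕ × ℕ)) := by
    rw [ht, multiset_map_range]
    refine Finset.sum_congr rfl fun a ha => ?_
    have ha' : a < n := Finset.mem_range.mp ha
    have hlen : (t.take (a + 1)).length = a + 1 := by
      rw [List.length_take]; omega
    simp [comp, hlen, Xw]
  have h2 : ((List.range t.length).map (fun i => comp (t.drop i)) : Multiset (ℕ × ℕ))
      = ∑ a ∈ Finset.range n, ({(a + 1, Yw t (a + 1))} : Multiset (ℕ × ℕ)) := by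
    rw [ht, multiset_map_range]
    rw [← Finset.sum_range_reflect (fun a => ({(a + 1, Yw t (a + 1))} : Multiset (ℕ × ℕ))) n]
    refine Finset.sum_congr rfl fun i hi => ?_
    have hi' : i < n := Finset.mem_range.mp hi
    have e1 : n - 1 - i + 1 = n - i := by omega
    have e2 : (t.drop i).length = n - i := by rw [List.length_drop, ht]
    have e3 : (t.drop i).count true = Yw t (n - i) := by
      rw [Yw, ht, Nat.sub_sub_self (by omega)]
    rw [e1, ← e3, comp, e2]
  rw [psM, h1, h2, ← Finset.sum_add_distrib]
  refine Finset.sum_congr rfl fun a _ => ?_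
  simp [pairM, Multiset.insert_eq_cons, ← Multiset.singleton_add]

lemma psM_eq_iff {n : ℕ} {s t : List Bool} (hs : s.length = n) (ht : t.length = n) :
    psM t = psM s ↔ ∀ k, 1 ≤ k → k ≤ n → pairM t k = pairM s k := by
  have key : ∀ (u : List Bool) (k : ℕ), 1 ≤ k → k ≤ n →
      (∑ a ∈ Finset.range n, pairM u (a + 1)).filter (fun p => p.1 = k) = pairM u k := by
    intro u k h1 h2
    rw [filter_sum]
    have step : ∀ a ∈ Finset.range n,
        (pairM u (a + 1)).filter (fun p => p.1 = k) = if k - 1 = a then pairM u k else 0 := by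
      intro a _
      by_cases hak : a + 1 = k
      · have hk1 : k - 1 = a := by omega
        rw [if_pos hk1, ← hak]
        simp [pairM, Multiset.filter_cons, Multiset.filter_singleton]
      · have : ¬ (k - 1 = a) := by omega
        simp [pairM, Multiset.filter_cons, Multiset.filter_singleton, hak, this]
    rw [Finset.sum_congr rfl step, Finset.sum_ite_eq]
    simp only [Finset.mem_range]
    rw [if_pos (by omega)]
  constructor
  · intro h k h1 h2
    have := congrArg (Multiset.filter (fun p => p.1 = k)) h
    rw [psM_eq_sum ht, psM_eq_sum hs, key t k h1 h2, key s k h1 h2] at this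
    exact this
  · intro h
    rw [psM_eq_sum ht, psM_eq_sum hs]
    exact Finset.sum_congr rfl fun a ha =>
      h (a + 1) (by omega) (by have := Finset.mem_range.mp ha; omega)

def Agood (n : ℕ) (s t : List Bool) : Prop :=
  ∀ k, k ≤ n → (Xw t k = Xw s k ∧ Xw t (n - k) = Xw s (n - k)) ∨
               (Xw t k = Yw s k ∧ Xw t (n - k) = Yw s (n - k))

lemma psM_iff_Agood {n : ℕ} {s t : List Bool} (hn : 1 ≤ n)
    (hs : s.length = n) (ht : t.length = n) :
    psM t = psM s ↔ Agood n s t := by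
  have hsum_t : ∀ a, Xw t (n - a) + Yw t a = t.count true := fun a => by
    have := Xw_add_Yw t a; rwa [ht] at this
  have hsum_s1 : ∀ a, Xw s (n - a) + Yw s a = s.count true := fun a => by
    have := Xw_add_Yw s a; rwa [hs] at this
  have hsum_s2 : ∀ a, a ≤ n → Xw s a + Yw s (n - a) = s.count true := fun a ha => by
    have := hsum_s1 (n - a); rwa [Nat.sub_sub_self ha] at this
  have hcn : Xw s n = s.count true := by rw [← hs]; exact Xw_length s
  have hdn : Yw s n = s.count true := by rw [← hs]; exact Yw_length s
  have htn : Xw t n = t.count true := by rw [← ht]; exact Xw_length t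
  have htn' : Yw t n = t.count true := by rw [← ht]; exact Yw_length t
  rw [psM_eq_iff hs ht]
  constructor
  · intro hp
    have hw : Xw t n = s.count true := by
      rcases pair_eq (show ({(n, Xw t n), (n, Yw t n)} : Multiset (ℕ × ℕ))
          = {(n, Xw s n), (n, Yw s n)} from hp n hn le_rfl) with ⟨h1, _⟩ | ⟨h1, _⟩ <;>
        have := (Prod.ext_iff.mp h1).2 <;> omega
    intro k hk
    by_cases hk0 : k = 0
    · subst hk0
      simp only [Nat.sub_zero]
      left
      constructor
      · simp [Xw]
      · omega
    · have h1k : 1 ≤ k := by omega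
      rcases pair_eq (show ({(k, Xw t k), (k, Yw t k)} : Multiset (ℕ × ℕ))
          = {(k, Xw s k), (k, Yw s k)} from hp k h1k hk) with ⟨h1, h2⟩ | ⟨h1, h2⟩
      · have e1 := (Prod.ext_iff.mp h1).2
        have e2 := (Prod.ext_iff.mp h2).2
        left
        refine ⟨e1, ?_⟩
        have := hsum_t k; have := hsum_s1 k; omega
      · have e1 := (Prod.ext_iff.mp h1).2
        have e2 := (Prod.ext_iff.mp h2).2
        right
        refine ⟨e1, ?_⟩
        have := hsum_t k; have := hsum_s2 k hk; omega
  · intro hA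
    have hw : Xw t n = s.count true := by
      rcases hA 0 (by omega) with ⟨-, h⟩ | ⟨-, h⟩ <;> rw [Nat.sub_zero] at h <;> omega
    intro k h1k hk
    rcases hA k hk with ⟨e1, e2⟩ | ⟨e1, e2⟩
    · have eY : Yw t k = Yw s k := by
        have := hsum_t k; have := hsum_s1 k; omega
      rw [pairM, pairM, e1, eY]
    · have eY : Yw t k = Xw s k := by
        have := hsum_t k; have := hsum_s2 k hk; omega
      rw [pairM, pairM, e1, eY]
      exact Multiset.pair_comm _ _

lemma locate (j : ℕ → ℕ) (m k : ℕ) (hj0 : j 0 = 0) (h1 : 1 ≤ k) (hk : k ≤ j m) :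
    ∃ i, 1 ≤ i ∧ i ≤ m ∧ j (i - 1) < k ∧ k ≤ j i := by
  induction m with
  | zero => omega
  | succ p ih =>
    by_cases hp : k ≤ j p
    · obtain ⟨i, h⟩ := ih hp
      exact ⟨i, h.1, by omega, h.2.2⟩
    · exact ⟨p + 1, by omega, le_refl _, by simpa using (by omega : j p < k), hk⟩

lemma jmono_le (j : ℕ → ℕ) (ℓ : ℕ) (hmono : ∀ i, i < ℓ → j i < j (i + 1)) :
    ∀ a b, a ≤ b → b ≤ ℓ → j a ≤ j b := by
  intro a b hab hbl
  induction b with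
  | zero =>
    have : a = 0 := by omega
    subst this; exact le_refl _
  | succ p ih =>
    rcases Nat.eq_or_lt_of_le hab with h | h
    · subst h; exact le_refl _
    · have h1 := hmono p (by omega)
      have h2 := ih (by omega) (by omega)
      omega

def zoneP (n : ℕ) (j : ℕ → ℕ) (S : Finset ℕ) (k : ℕ) : Prop :=
  ∃ i ∈ S, (j (i - 1) ≤ k ∧ k ≤ j i) ∨ (n - j i ≤ k ∧ k ≤ n - j (i - 1))

open Classical in
noncomputable def xfD (n : ℕ) (j : ℕ → ℕ) (c d : ℕ → ℕ) (S : Finset ℕ) (k : ℕ) : ℕ :=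
  if zoneP n j S k then d k else c k

lemma xfD_pos {n : ℕ} {j c d : ℕ → ℕ} {S : Finset ℕ} {k : ℕ} (h : zoneP n j S k) :
    xfD n j c d S k = d k := by
  unfold xfD; exact if_pos h

lemma xfD_neg {n : ℕ} {j c d : ℕ → ℕ} {S : Finset ℕ} {k : ℕ} (h : ¬ zoneP n j S k) :
    xfD n j c d S k = c k := by
  unfold xfD; exact if_neg h

theorem card_equivalent_strings (n : ℕ) (hn : 2 ≤ n) (s : List Bool) (hs : s.length = n)
    (ℓ : ℕ) (j : ℕ → ℕ) (hj0 : j 0 = 0)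
    (hmono : ∀ i, i < ℓ → j i < j (i + 1))
    (hle : j ℓ ≤ n / 2)
    (hlast : j (ℓ + 1) = n - j ℓ)
    (hbal : ∀ k, k ≤ n / 2 →
      ((s.take k).count true = (s.drop (n - k)).count true ↔ ∃ i ≤ ℓ, j i = k)) :
    {t : List Bool | t.length = n ∧ psM t = psM s}.ncard =
      2 ^ ((Finset.Icc 1 (ℓ + 1)).filter (fun i => j (i - 1) + 2 ≤ j i)).card := by
  classical
  set I : Finset ℕ := (Finset.Icc 1 (ℓ + 1)).filter (fun i => j (i - 1) + 2 ≤ j i) with hIdef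
  have hsum1 : ∀ a, Xw s (n - a) + Yw s a = s.count true := fun a => by
    have := Xw_add_Yw s a; rwa [hs] at this
  have hsum2 : ∀ a, a ≤ n → Xw s a + Yw s (n - a) = s.count true := fun a ha => by
    have := hsum1 (n - a); rwa [Nat.sub_sub_self ha] at this
  have hcn : Xw s n = s.count true := by rw [← hs]; exact Xw_length s
  have hdn : Yw s n = s.count true := by rw [← hs]; exact Yw_length s
  have hc0 : Xw s 0 = 0 := rfl
  have hd0 : Yw s 0 = 0 := by simp [Yw]
  have hcstep : ∀ k, k < n → (Xw s (k + 1) = Xw s k ∨ Xw s (k + 1) = Xw s k + 1) :=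
    fun k hk => Xw_step s k (by rw [hs]; exact hk)
  have hdstep : ∀ k, k < n → (Yw s (k + 1) = Yw s k ∨ Yw s (k + 1) = Yw s k + 1) := by
    intro k hk
    have h1 := hsum1 k
    have h2 := hsum1 (k + 1)
    have h3 := hcstep (n - k - 1) (by omega)
    have e : n - k - 1 + 1 = n - k := by omega
    rw [e] at h3
    have e2 : n - (k + 1) = n - k - 1 := by omega
    rw [e2] at h2
    omega
  have hbal' : ∀ k, k ≤ n / 2 → (Xw s k = Yw s k ↔ ∃ i ≤ ℓ, j i = k) := by
    intro k hk
    have := hbal k hk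
    rw [Xw, Yw, hs]
    exact this
  have hbalsym : ∀ k, k ≤ n → Xw s k = Yw s k → Xw s (n - k) = Yw s (n - k) := by
    intro k hk h
    have h1 := hsum1 k
    have h2 := hsum2 k hk
    omega
  have hjmono := jmono_le j ℓ hmono
  have hjle : ∀ i, i ≤ ℓ → j i ≤ n / 2 := fun i hi => le_trans (hjmono i ℓ hi le_rfl) hle
  have hjn : ∀ i, i ≤ ℓ + 1 → j i ≤ n := by
    intro i hi
    rcases Nat.lt_or_ge i (ℓ + 1) with h | h
    · have := hjle i (by omega); omega
    · have hie : i = ℓ + 1 := by omega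
      rw [hie, hlast]; omega
  have hjbal : ∀ i, i ≤ ℓ → Xw s (j i) = Yw s (j i) :=
    fun i hi => (hbal' (j i) (hjle i hi)).mpr ⟨i, hi, rfl⟩
  have hjbal2 : ∀ i, i ≤ ℓ + 1 → Xw s (j i) = Yw s (j i) := by
    intro i hi
    rcases Nat.lt_or_ge i (ℓ + 1) with h | h
    · exact hjbal i (by omega)
    · have hie : i = ℓ + 1 := by omega
      rw [hie, hlast]
      exact hbalsym (j ℓ) (by have := hjle ℓ le_rfl; omega) (hjbal ℓ le_rfl)
  have hjbalm : ∀ i, i ≤ ℓ + 1 → Xw s (n - j i) = Yw s (n - j i) :=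
    fun i hi => hbalsym (j i) (hjn i hi) (hjbal2 i hi)
  have hImem : ∀ i, i ∈ I → 1 ≤ i ∧ i ≤ ℓ + 1 ∧ j (i - 1) + 2 ≤ j i := by
    intro i hi
    rw [hIdef, Finset.mem_filter, Finset.mem_Icc] at hi
    exact ⟨hi.1.1, hi.1.2, hi.2⟩
  have hzmir : ∀ S : Finset ℕ, S ⊆ I → ∀ k, k ≤ n →
      (zoneP n j S (n - k) ↔ zoneP n j S k) := by
    intro S hS k hk
    constructor <;> rintro ⟨i, hiS, hcl⟩ <;>
      obtain ⟨hi1, hi2, -⟩ := hImem i (hS hiS) <;>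
      have hn1 := hjn i hi2 <;>
      have hn2 := hjn (i - 1) (by omega) <;>
      exact ⟨i, hiS, by omega⟩
  have hubal : ∀ i, 1 ≤ i → i ≤ ℓ + 1 → ∀ k, j (i - 1) < k → k < j i → k ≤ n / 2 →
      Xw s k ≠ Yw s k := by
    intro i hi1 hi2 k hk1 hk2 hk3 heq
    obtain ⟨i', hi'l, hji'⟩ := (hbal' k hk3).mp heq
    rcases Nat.lt_or_ge i' i with h | h
    · have := hjmono i' (i - 1) (by omega) (by omega)
      omega
    · rcases Nat.lt_or_ge i (ℓ + 1) with h2 | h2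
      · have := hjmono i i' h hi'l
        omega
      · omega
  have huniq : ∀ k, k ≤ n / 2 → Xw s k ≠ Yw s k →
      ∀ i, 1 ≤ i → i ≤ ℓ + 1 → j (i - 1) < k → k < j i →
      ∀ i', i' ∈ I →
      ((j (i' - 1) ≤ k ∧ k ≤ j i') ∨ (n - j i' ≤ k ∧ k ≤ n - j (i' - 1))) → i' = i := by
    intro k hk2 hnb i hi1 hi2 hik1 hik2 i' hi'I hcl
    obtain ⟨h1', h2', -⟩ := hImem i' hi'I
    have hclA : j (i' - 1) ≤ k ∧ k ≤ j i' := by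
      rcases hcl with h | ⟨hb1, hb2⟩
      · exact h
      · rcases Nat.lt_or_ge i' (ℓ + 1) with hlt | hge
        · exfalso
          have hji' := hjle i' (by omega)
          have hji'2 : j i' = k := by omega
          exact hnb ((hbal' k hk2).mpr ⟨i', by omega, hji'2⟩)
        · have hi'e : i' = ℓ + 1 := by omega
          subst hi'e
          simp only [Nat.add_sub_cancel] at hb1 hb2 ⊢
          have h1 := hlast
          have h2 := hjle ℓ le_rfl
          omega
    by_contra hne2
    rcases Nat.lt_or_ge i' i with hlt | hge
    · have := hjmono i' (i - 1) (by omega) (by omega)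
      omega
    · have := hjmono i (i' - 1) (by omega) (by omega)
      omega
  have hxf0 : ∀ S : Finset ℕ, xfD n j (Xw s) (Yw s) S 0 = 0 := by
    intro S
    by_cases h : zoneP n j S 0
    · rw [xfD_pos h]; exact hd0
    · rw [xfD_neg h]; exact hc0
  have hxfstep : ∀ S : Finset ℕ, S ⊆ I → ∀ k, k < n →
      (xfD n j (Xw s) (Yw s) S (k + 1) = xfD n j (Xw s) (Yw s) S k ∨
       xfD n j (Xw s) (Yw s) S (k + 1) = xfD n j (Xw s) (Yw s) S k + 1) := by
    intro S hS k hk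
    by_cases z1 : zoneP n j S k <;> by_cases z2 : zoneP n j S (k + 1)
    · rw [xfD_pos z1, xfD_pos z2]; exact hdstep k hk
    · obtain ⟨i, hiS, hcl⟩ := z1
      obtain ⟨hi1, hi2, -⟩ := hImem i (hS hiS)
      have hnb2 : ¬ ((j (i - 1) ≤ k + 1 ∧ k + 1 ≤ j i) ∨
          (n - j i ≤ k + 1 ∧ k + 1 ≤ n - j (i - 1))) := fun hc => z2 ⟨i, hiS, hc⟩
      have hbalk : Xw s k = Yw s k := by
        rcases hcl with ⟨ha1, ha2⟩ | ⟨hb1, hb2⟩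
        · have hek : k = j i := by omega
          rw [hek]; exact hjbal2 i hi2
        · have hek : k = n - j (i - 1) := by omega
          rw [hek]; exact hjbalm (i - 1) (by omega)
      rw [xfD_neg z2, xfD_pos (⟨i, hiS, hcl⟩ : zoneP n j S k), ← hbalk]
      exact hcstep k hk
    · obtain ⟨i, hiS, hcl⟩ := z2
      obtain ⟨hi1, hi2, -⟩ := hImem i (hS hiS)
      have hnb1 : ¬ ((j (i - 1) ≤ k ∧ k ≤ j i) ∨
          (n - j i ≤ k ∧ k ≤ n - j (i - 1))) := fun hc => z1 ⟨i, hiS, hc⟩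
      have hbalk1 : Xw s (k + 1) = Yw s (k + 1) := by
        rcases hcl with ⟨ha1, ha2⟩ | ⟨hb1, hb2⟩
        · have hek : k + 1 = j (i - 1) := by omega
          rw [hek]; exact hjbal2 (i - 1) (by omega)
        · have hek : k + 1 = n - j i := by
            have := hjn i hi2; omega
          rw [hek]; exact hjbalm i hi2
      rw [xfD_pos (⟨i, hiS, hcl⟩ : zoneP n j S (k + 1)), xfD_neg z1, ← hbalk1]
      exact hcstep k hk
    · rw [xfD_neg z1, xfD_neg z2]; exact hcstep k hk
  have hΦlen : ∀ S : Finset ℕ, (strOf n (xfD n j (Xw s) (Yw s) S)).length = n :=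
    fun S => strOf_length _ _
  have hΦX : ∀ S : Finset ℕ, S ⊆ I → ∀ k, k ≤ n →
      Xw (strOf n (xfD n j (Xw s) (Yw s) S)) k = xfD n j (Xw s) (Yw s) S k :=
    fun S hS => Xw_strOf n _ (hxf0 S) (hxfstep S hS)
  have hΦA : ∀ S : Finset ℕ, S ⊆ I → Agood n s (strOf n (xfD n j (Xw s) (Yw s) S)) := by
    intro S hS k hk
    by_cases hz : zoneP n j S k
    · right
      have hz2 : zoneP n j S (n - k) := (hzmir S hS k hk).mpr hz
      rw [hΦX S hS k hk, hΦX S hS (n - k) (by omega), xfD_pos hz, xfD_pos hz2]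
      exact ⟨rfl, rfl⟩
    · left
      have hz2 : ¬ zoneP n j S (n - k) := fun hc => hz ((hzmir S hS k hk).mp hc)
      rw [hΦX S hS k hk, hΦX S hS (n - k) (by omega), xfD_neg hz, xfD_neg hz2]
      exact ⟨rfl, rfl⟩
  have hsep : ∀ S, S ⊆ I → ∀ S', S' ⊆ I → ∀ i, i ∈ S → i ∉ S' →
      strOf n (xfD n j (Xw s) (Yw s) S) ≠ strOf n (xfD n j (Xw s) (Yw s) S') := by
    intro S hS S' hS' i hiS hiS' heq
    obtain ⟨hi1, hi2, hgap⟩ := hImem i (hS hiS)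
    have hk2 : j (i - 1) + 1 ≤ n / 2 := by
      rcases Nat.lt_or_ge i (ℓ + 1) with h | h
      · have := hjle i (by omega); omega
      · have h1 : i - 1 = ℓ := by omega
        have h2 : i = ℓ + 1 := by omega
        rw [h1]
        rw [h1, h2] at hgap
        rw [hlast] at hgap
        have := hjle ℓ le_rfl
        omega
    have hnb : Xw s (j (i - 1) + 1) ≠ Yw s (j (i - 1) + 1) :=
      hubal i hi1 hi2 _ (by omega) (by omega) hk2
    have hzS : zoneP n j S (j (i - 1) + 1) := ⟨i, hiS, Or.inl ⟨by omega, by omega⟩⟩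
    have hzS' : ¬ zoneP n j S' (j (i - 1) + 1) := by
      rintro ⟨i', hi'S', hcl⟩
      have hii := huniq (j (i - 1) + 1) hk2 hnb i hi1 hi2 (by omega) (by omega)
        i' (hS' hi'S') hcl
      subst hii
      exact hiS' hi'S'
    have hkn : j (i - 1) + 1 ≤ n := by omega
    have e1 := hΦX S hS (j (i - 1) + 1) hkn
    have e2 := hΦX S' hS' (j (i - 1) + 1) hkn
    rw [heq] at e1
    rw [xfD_pos hzS] at e1
    rw [xfD_neg hzS'] at e2
    exact hnb (by omega)
  have hsurj : ∀ t : List Bool, t.length = n → Agood n s t →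
      ∃ S, S ⊆ I ∧ strOf n (xfD n j (Xw s) (Yw s) S) = t := by
    intro t ht hA
    set S : Finset ℕ := I.filter (fun i => Xw t (j (i - 1) + 1) = Yw s (j (i - 1) + 1))
      with hSdef
    have hSsub : S ⊆ I := Finset.filter_subset _ _
    refine ⟨S, hSsub, ?_⟩
    have main : ∀ k, 1 ≤ k → k ≤ n / 2 → Xw s k ≠ Yw s k →
        (xfD n j (Xw s) (Yw s) S k = Xw t k ∧
         xfD n j (Xw s) (Yw s) S (n - k) = Xw t (n - k)) := by
      intro k h1k hk2 hnb
      obtain ⟨i, hi1, hi2, hik1, hik2⟩ :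
          ∃ i, 1 ≤ i ∧ i ≤ ℓ + 1 ∧ j (i - 1) < k ∧ k < j i := by
        rcases le_or_gt k (j ℓ) with hc | hc
        · obtain ⟨i, h1, h2, h3, h4⟩ := locate j ℓ k hj0 h1k hc
          refine ⟨i, h1, by omega, h3, ?_⟩
          rcases Nat.lt_or_ge k (j i) with h | h
          · exact h
          · exfalso
            have hji : j i = k := by omega
            exact hnb (hji ▸ hjbal i h2)
        · refine ⟨ℓ + 1, by omega, le_rfl, ?_, ?_⟩
          · simp only [Nat.add_sub_cancel]
            exact hc
          · rw [hlast]
            have := hjle ℓ le_rfl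
            rcases Nat.lt_or_ge k (n - j ℓ) with h | h
            · exact h
            · exfalso
              have hke : k = n - j ℓ := by omega
              have hbb : Xw s k = Yw s k := by
                rw [hke, ← hlast]; exact hjbal2 (ℓ + 1) le_rfl
              exact hnb hbb
      have hukn : k ≤ n := by omega
      have hub : ∀ m, j (i - 1) < m → m ≤ k → Xw s m ≠ Yw s m := by
        intro m hm1 hm2
        exact hubal i hi1 hi2 m hm1 (by omega) (by omega)
      have hiI : i ∈ I := by
        rw [hIdef, Finset.mem_filter, Finset.mem_Icc]
        exact ⟨⟨hi1, hi2⟩, by omega⟩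
      have chain : ∀ (u v : ℕ → ℕ),
          (∀ m, m < n → (u (m + 1) = u m ∨ u (m + 1) = u m + 1)) →
          (∀ m, m < n → (v (m + 1) = v m ∨ v (m + 1) = v m + 1)) →
          (∀ a, a ≤ n → u a + v (n - a) = s.count true) →
          (∀ a, a ≤ n → v a + u (n - a) = s.count true) →
          (∀ m, m ≤ n → (Xw t m = u m ∧ Xw t (n - m) = u (n - m)) ∨
                        (Xw t m = v m ∧ Xw t (n - m) = v (n - m))) →
          (∀ m, j (i - 1) < m → m ≤ k → u m ≠ v m) →
          (Xw t (j (i - 1) + 1) = u (j (i - 1) + 1) ∧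
           Xw t (n - (j (i - 1) + 1)) = u (n - (j (i - 1) + 1))) →
          ∀ m, j (i - 1) + 1 ≤ m → m ≤ k →
            Xw t m = u m ∧ Xw t (n - m) = u (n - m) := by
        intro u v hu hv huv hvu hAuv hne base m
        induction m with
        | zero => intro h1 h2; exact absurd h1 (by omega)
        | succ p ih =>
          intro hm1 hm2
          rcases Nat.lt_or_ge (j (i - 1) + 1) (p + 1) with hcase | hcase
          · obtain ⟨e1, e2⟩ := ih (by omega) (by omega)
            have hpn : p < n := by omega
            have hx1 := Xw_step t p (by rw [ht]; omega)
            have hx2 := Xw_step t (n - p - 1) (by rw [ht]; omega)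
            have exp : n - p - 1 + 1 = n - p := by omega
            rw [exp] at hx2
            have hu1 := hu p hpn
            have hv1 := hv p hpn
            have hu2 := hu (n - p - 1) (by omega)
            have hv2 := hv (n - p - 1) (by omega)
            rw [exp] at hu2 hv2
            have s1 := huv p (by omega)
            have s2 := huv (p + 1) (by omega)
            have s3 := hvu p (by omega)
            have s4 := hvu (p + 1) (by omega)
            have expp : n - (p + 1) = n - p - 1 := by omega
            rw [expp] at s2 s4
            have hA2 := hAuv (p + 1) (by omega)
            rw [expp] at hA2
            have hne1 := hne p (by omega) (by omega)
            have hne2 := hne (p + 1) (by omega) hm2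
            rw [expp]
            omega
          · have hpe : p + 1 = j (i - 1) + 1 := by omega
            rw [hpe]; exact base
      rcases hA (j (i - 1) + 1) (by omega) with ⟨e1, e2⟩ | ⟨e1, e2⟩
      · have hiS : i ∉ S := by
          rw [hSdef, Finset.mem_filter]
          rintro ⟨-, hcond⟩
          exact hub (j (i - 1) + 1) (by omega) (by omega) (by omega)
        have hnz : ¬ zoneP n j S k := by
          rintro ⟨i', hi'S, hcl⟩
          have hii := huniq k hk2 hnb i hi1 hi2 hik1 hik2 i' (hSsub hi'S) hcl
          subst hii
          exact hiS hi'S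
        have hnz2 : ¬ zoneP n j S (n - k) := fun hc => hnz ((hzmir S hSsub k hukn).mp hc)
        have hch := chain (Xw s) (Yw s) hcstep hdstep hsum2
          (fun a _ => by have := hsum1 a; omega) hA hub ⟨e1, e2⟩ k (by omega) le_rfl
        rw [xfD_neg hnz, xfD_neg hnz2]
        exact ⟨hch.1.symm, hch.2.symm⟩
      · have hiS : i ∈ S := by
          rw [hSdef, Finset.mem_filter]; exact ⟨hiI, e1⟩
        have hz : zoneP n j S k := ⟨i, hiS, Or.inl ⟨by omega, by omega⟩⟩
        have hz2 : zoneP n j S (n - k) := (hzmir S hSsub k hukn).mpr hz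
        have hAswap : ∀ m, m ≤ n → (Xw t m = Yw s m ∧ Xw t (n - m) = Yw s (n - m)) ∨
            (Xw t m = Xw s m ∧ Xw t (n - m) = Xw s (n - m)) := fun m hm => (hA m hm).symm
        have hch := chain (Yw s) (Xw s) hdstep hcstep
          (fun a _ => by have := hsum1 a; omega) hsum2 hAswap
          (fun m h1 h2 he => hub m h1 h2 he.symm) ⟨e1, e2⟩ k (by omega) le_rfl
        rw [xfD_pos hz, xfD_pos hz2]
        exact ⟨hch.1.symm, hch.2.symm⟩
    apply Xw_ext _ _ (by rw [hΦlen S, ht])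
    intro k hk
    rw [hΦlen S] at hk
    rw [hΦX S hSsub k hk]
    by_cases hbk : Xw s k = Yw s k
    · have h1 : xfD n j (Xw s) (Yw s) S k = Xw s k := by
        by_cases hz : zoneP n j S k
        · rw [xfD_pos hz]; exact hbk.symm
        · exact xfD_neg hz
      rcases hA k hk with ⟨e, -⟩ | ⟨e, -⟩ <;> omega
    · have hk1 : 1 ≤ k := by
        rcases Nat.eq_zero_or_pos k with h | h
        · exfalso; apply hbk; rw [h, hc0, hd0]
        · exact h
      have hkn' : k ≤ n - 1 := by
        rcases Nat.lt_or_ge k n with h | h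
        · omega
        · exfalso; apply hbk
          have hkn2 : k = n := by omega
          rw [hkn2]; omega
      rcases le_or_gt k (n / 2) with hhalf | hhalf
      · exact (main k hk1 hhalf hbk).1
      · have hnk2 : n - k ≤ n / 2 := by omega
        have hnk1 : 1 ≤ n - k := by omega
        have hnbk : Xw s (n - k) ≠ Yw s (n - k) := by
          intro hc
          apply hbk
          have hbs := hbalsym (n - k) (by omega) hc
          rwa [Nat.sub_sub_self (by omega : k ≤ n)] at hbs
        have hm2 := (main (n - k) hnk1 hnk2 hnbk).2
        rwa [Nat.sub_sub_self (by omega : k ≤ n)] at hm2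
  have key : {t : List Bool | t.length = n ∧ psM t = psM s}
      = ↑(I.powerset.image (fun S => strOf n (xfD n j (Xw s) (Yw s) S))) := by
    ext t
    simp only [Set.mem_setOf_eq, Finset.mem_coe, Finset.mem_image, Finset.mem_powerset]
    constructor
    · rintro ⟨ht, hp⟩
      obtain ⟨S, hSsub, hPhi⟩ := hsurj t ht ((psM_iff_Agood (by omega) hs ht).mp hp)
      exact ⟨S, hSsub, hPhi⟩
    · rintro ⟨S, hSsub, rfl⟩
      exact ⟨hΦlen S, (psM_iff_Agood (by omega) hs (hΦlen S)).mpr (hΦA S hSsub)⟩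
  have hinj : Set.InjOn (fun S => strOf n (xfD n j (Xw s) (Yw s) S)) ↑I.powerset := by
    intro S hS S' hS' heq
    simp only [Finset.mem_coe, Finset.mem_powerset] at hS hS'
    by_contra hne
    have hex : ∃ i, (i ∈ S ∧ i ∉ S') ∨ (i ∈ S' ∧ i ∉ S) := by
      by_contra hno
      push_neg at hno
      apply hne
      ext a
      have := hno a
      tauto
    obtain ⟨i, h | h⟩ := hex
    · exact hsep S hS S' hS' i h.1 h.2 heq
    · exact hsep S' hS' S hS i h.1 h.2 heq.symm
  rw [key, Set.ncard_coe_finset, Finset.card_image_of_injOn hinj, Finset.card_powerset]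
end

section
/- For any n ≥ 2, the maximum over all binary strings s of length n of the number of strings sharing the prefix-suffix composition multiset of s equals 2^{⌊(n-2)/4⌋ + 1}. -/
theorem Sym2.eq_of_multiset_pair_eq {α : Type*} {a b c d : α}
    (h : ({a, b} : Multiset α) = {c, d}) : s(a, b) = s(c, d) := by
  simp only [Multiset.insert_eq_cons, Multiset.cons_eq_cons, Multiset.singleton_inj,
    Multiset.singleton_eq_cons_iff, exists_eq_right_right, and_true] at h
  rw [Sym2.eq_iff]
  tauto

theorem eq_and_eq_of_sym2_eq {α : Type*} {p q u v u' v' : α} (h : s(u, v) = s(p, q))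
    (h' : s(u', v') = s(p, q)) (hpq : p ≠ q → (u = p ↔ u' = p)) : u = u' ∧ v = v' := by
  rw [Sym2.eq_iff] at h h'
  by_cases hp : p = q
  · subst hp; aesop
  · have := hpq hp; aesop

theorem Finset.card_le_of_forall_succ_notMem {S : Finset ℕ} {m : ℕ} (hS : S ⊆ Finset.range m)
    (h : ∀ k ∈ S, k + 1 ∉ S) : S.card ≤ (m + 1) / 2 := by
  calc S.card ≤ (Finset.range ((m + 1) / 2)).card := by
        refine Finset.card_le_card_of_injOn (· / 2) (fun k hk => ?_) fun k hk k' hk' hkk' => ?_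
        · have := Finset.mem_range.1 (hS hk)
          simp only [Finset.coe_range, Set.mem_Iio]
          omega
        · by_contra hne
          have : k' = k + 1 ∨ k = k' + 1 := by simp only at hkk'; omega
          rcases this with rfl | rfl
          exacts [h k hk hk', h k' hk' hk]
    _ = (m + 1) / 2 := Finset.card_range _

def HasUnitSteps (f : ℕ → ℕ) : Prop := ∀ k, f k ≤ f (k + 1) ∧ f (k + 1) ≤ f k + 1

/-- `k ∈ runStarts a b m` means that a run of indices where `a ≠ b` starts at `k + 1 ≤ m`. -/
def runStarts (a b : ℕ → ℕ) (m : ℕ) : Finset ℕ :=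
  (Finset.range m).filter fun k => a k = b k ∧ a (k + 1) ≠ b (k + 1)

theorem card_runStarts_le (a b : ℕ → ℕ) (m : ℕ) : (runStarts a b m).card ≤ (m + 1) / 2 :=
  Finset.card_le_of_forall_succ_notMem (Finset.filter_subset _ _)
    fun _ hk hk₁ => (Finset.mem_filter.1 hk).2.2 (Finset.mem_filter.1 hk₁).2.1

section UnitStepPaths

variable {a b x y x' y' : ℕ → ℕ}

/-- Swapping between `k` and `k + 1` would make `a` and `b` meet at `k + 1`, since all four
paths move by `0` or `1`. -/
theorem eq_iff_eq_succ_of_sym2_eq (ha : HasUnitSteps a) (hb : HasUnitSteps b)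
    (hx : HasUnitSteps x) (hy : HasUnitSteps y) {k : ℕ} (hk : a k ≠ b k)
    (hk₁ : a (k + 1) ≠ b (k + 1)) (h : s(x k, y k) = s(a k, b k))
    (h₁ : s(x (k + 1), y (k + 1)) = s(a (k + 1), b (k + 1))) :
    x k = a k ↔ x (k + 1) = a (k + 1) := by
  rw [Sym2.eq_iff] at h h₁
  have := ha k; have := hb k; have := hx k; have := hy k
  omega

theorem eq_and_eq_of_sym2_eq_of_runStarts (ha : HasUnitSteps a) (hb : HasUnitSteps b)
    (hx : HasUnitSteps x) (hy : HasUnitSteps y) (hx' : HasUnitSteps x')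
    (hy' : HasUnitSteps y') (h₀ : a 0 = b 0) {m : ℕ}
    (h : ∀ k ≤ m, s(x k, y k) = s(a k, b k)) (h' : ∀ k ≤ m, s(x' k, y' k) = s(a k, b k))
    (hstart : ∀ k ∈ runStarts a b m, (x (k + 1) = a (k + 1) ↔ x' (k + 1) = a (k + 1))) :
    ∀ k ≤ m, x k = x' k ∧ y k = y' k := by
  intro k hk
  induction k with
  | zero => exact eq_and_eq_of_sym2_eq (h 0 hk) (h' 0 hk) (absurd h₀)
  | succ k ih =>
    refine eq_and_eq_of_sym2_eq (h _ hk) (h' _ hk) fun hab₁ => ?_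
    by_cases hab : a k = b k
    · exact hstart k (Finset.mem_filter.2 ⟨Finset.mem_range.2 hk, hab, hab₁⟩)
    rw [← eq_iff_eq_succ_of_sym2_eq ha hb hx hy hab hab₁ (h k (by omega)) (h _ hk),
      ← eq_iff_eq_succ_of_sym2_eq ha hb hx' hy' hab hab₁ (h' k (by omega)) (h' _ hk),
      (ih (by omega)).1]

end UnitStepPaths

theorem comp_append (u w : List Bool) : comp (u ++ w) = comp u + comp w := by
  simp [comp, List.count_append]

theorem comp_reverse (u : List Bool) : comp u.reverse = comp u := by
  simp [comp]

def prefixComps (s : List Bool) : Multiset (ℕ × ℕ) :=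
  ((List.range s.length).map (fun j => comp (s.take (j + 1))) : Multiset (ℕ × ℕ))

theorem psM_eq_prefixComps_add (s : List Bool) :
    psM s = prefixComps s + prefixComps s.reverse := by
  rw [psM, prefixComps, prefixComps, List.length_reverse]
  congr 1
  rw [← Multiset.coe_reverse, ← List.map_reverse, List.range_eq_range', List.reverse_range',
    List.map_map, ← List.range_eq_range']
  congr 1
  refine List.map_congr_left fun j hj => ?_
  simp only [List.mem_range] at hj
  simp only [Function.comp, List.take_reverse, comp_reverse]
  congr 2
  omega

theorem prefixComps_append (u w : List Bool) :
    prefixComps (u ++ w) = prefixComps u + (prefixComps w).map (comp u + ·) := by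
  simp only [prefixComps, List.length_append, List.range_add, List.map_append, List.map_map,
    ← Multiset.coe_add, Multiset.map_coe]
  congr 2
  · refine List.map_congr_left fun j hj => ?_
    rw [List.take_append_of_le_length (by rw [List.mem_range] at hj; omega)]
  · refine List.map_congr_left fun j hj => ?_
    rw [Function.comp, add_assoc, List.take_length_add_append, comp_append]
    rfl

theorem psM_reverse (s : List Bool) : psM s.reverse = psM s := by
  rw [psM_eq_prefixComps_add, psM_eq_prefixComps_add, List.reverse_reverse, add_comm]

theorem psM_append_append_self (u x : List Bool) :
    psM (u ++ (x ++ u)) =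
      psM u + (psM x).map (comp u + ·) + (psM u).map (comp u + comp x + ·) := by
  simp only [psM_eq_prefixComps_add, List.reverse_append, List.append_assoc, prefixComps_append,
    comp_reverse, Multiset.map_add, Multiset.map_map, Function.comp_def, add_assoc]
  abel

def prefixOnes (t : List Bool) (k : ℕ) : ℕ := (t.take k).count true

theorem prefixOnes_succ (t : List Bool) (k : ℕ) :
    prefixOnes t (k + 1) = prefixOnes t k + t[k]?.toList.count true := by
  rw [prefixOnes, prefixOnes, List.take_add_one, List.count_append]

theorem hasUnitSteps_prefixOnes (t : List Bool) : HasUnitSteps (prefixOnes t) := by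
  intro k
  rw [prefixOnes_succ]
  rcases t[k]? with _ | _ | _ <;> simp

theorem prefixOnes_of_length_le {t : List Bool} {k : ℕ} (hk : t.length ≤ k) :
    prefixOnes t k = t.count true := by
  rw [prefixOnes, List.take_of_length_le hk]

theorem prefixOnes_add_prefixOnes_reverse (t : List Bool) {k : ℕ} (hk : k ≤ t.length) :
    prefixOnes t k + prefixOnes t.reverse (t.length - k) = t.count true := by
  rw [prefixOnes, prefixOnes, List.take_reverse, Nat.sub_sub_self hk, List.count_reverse,
    ← List.count_append, List.take_append_drop]

theorem eq_of_prefixOnes_eq {t t' : List Bool} (hl : t.length = t'.length)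
    (h : ∀ k ≤ t.length, prefixOnes t k = prefixOnes t' k) : t = t' := by
  refine List.ext_getElem hl fun i hi hi' => ?_
  have := h (i + 1) hi
  rw [prefixOnes_succ, prefixOnes_succ, h i hi.le, List.getElem?_eq_getElem hi,
    List.getElem?_eq_getElem hi', Option.toList_some, Nat.add_left_cancel_iff] at this
  revert this
  cases t[i] <;> cases t'[i] <;> simp

theorem prefixComps_eq_map_range (s : List Bool) :
    prefixComps s = (Multiset.range s.length).map fun j => (j + 1, prefixOnes s (j + 1)) := by
  rw [prefixComps, ← Multiset.coe_range, Multiset.map_coe]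
  congr 1
  refine List.map_congr_left fun j hj => ?_
  simp only [List.mem_range] at hj
  simp only [comp, List.length_take, prefixOnes, Prod.mk.injEq, inf_eq_left, and_true]
  omega

theorem snd_filter_prefixComps {s : List Bool} {k : ℕ} (hk : 1 ≤ k) (hks : k ≤ s.length) :
    ((prefixComps s).filter (·.1 = k)).map Prod.snd = {prefixOnes s k} := by
  rw [prefixComps_eq_map_range, Multiset.filter_map, Multiset.map_map]
  have : (Multiset.range s.length).filter (· + 1 = k) = {k - 1} := by
    rw [Multiset.Nodup.ext ((Multiset.nodup_range _).filter _) (Multiset.nodup_singleton _)]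
    intro j
    simp only [Multiset.mem_filter, Multiset.mem_range, Multiset.mem_singleton]
    omega
  simp only [Function.comp_def, this, Multiset.map_singleton, Nat.sub_add_cancel hk]

theorem sym2_prefixOnes_eq_of_psM_eq {s t : List Bool} (h : psM t = psM s) {k : ℕ}
    (hk : k ≤ s.length) :
    s(prefixOnes t k, prefixOnes t.reverse k) = s(prefixOnes s k, prefixOnes s.reverse k) := by
  rcases Nat.eq_zero_or_pos k with rfl | hk₀
  · simp [prefixOnes]
  have hkt : k ≤ t.length := length_eq_of_psM_eq h ▸ hk
  have hfib := congrArg (fun M => (M.filter (·.1 = k)).map Prod.snd) h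
  simp only [psM_eq_prefixComps_add, Multiset.filter_add, Multiset.map_add,
    snd_filter_prefixComps hk₀ hk, snd_filter_prefixComps hk₀ hkt,
    snd_filter_prefixComps hk₀ (s.length_reverse ▸ hk),
    snd_filter_prefixComps hk₀ (t.length_reverse ▸ hkt)] at hfib
  exact Sym2.eq_of_multiset_pair_eq hfib

theorem count_eq_of_psM_eq {s t : List Bool} (h : psM t = psM s) :
    t.count true = s.count true := by
  have hlen := length_eq_of_psM_eq h
  have := sym2_prefixOnes_eq_of_psM_eq h le_rfl
  simpa only [prefixOnes_of_length_le, List.length_reverse, hlen, le_refl, List.count_reverse,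
    Sym2.eq_iff, and_self, or_self] using this

theorem comp_eq_of_psM_eq {s t : List Bool} (h : psM t = psM s) : comp t = comp s :=
  Prod.ext (length_eq_of_psM_eq h) (count_eq_of_psM_eq h)

theorem psM_append_append_eq {x y : List Bool} (h : psM x = psM y) (u : List Bool) :
    psM (u ++ (x ++ u)) = psM (u ++ (y ++ u)) := by
  rw [psM_append_append_self, psM_append_append_self, h, comp_eq_of_psM_eq h]

theorem exists_finset_psM_eq (r j : ℕ) :
    ∃ s : List Bool, s.length = 4 * j + r + 2 ∧
      ∃ S : Finset (List Bool), S.card = 2 ^ (j + 1) ∧ ∀ t ∈ S, psM t = psM s := by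
  induction j with
  | zero =>
    set s := List.replicate r false ++ [false, true]
    have hne : s ≠ s.reverse := by cases r <;> simp [s, List.replicate_succ]
    refine ⟨s, by simp [s], {s, s.reverse}, Finset.card_pair hne, ?_⟩
    simp [psM_reverse]
  | succ j ih =>
    obtain ⟨s, hs, S, hcard, hS⟩ := ih
    set S₀₁ := S.image fun x => [false, true] ++ (x ++ [false, true])
    set S₁₀ := S.image fun x => [true, false] ++ (x ++ [true, false])
    have hdisj : Disjoint S₀₁ S₁₀ := by simp [S₀₁, S₁₀, Finset.disjoint_left]
    refine ⟨[false, true] ++ (s ++ [false, true]), by simp [hs]; omega, S₀₁ ∪ S₁₀, ?_, ?_⟩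
    · have hwrap (u : List Bool) : Function.Injective fun x => u ++ (x ++ u) :=
        fun x y h => by simpa using h
      rw [Finset.card_union_of_disjoint hdisj, Finset.card_image_of_injective _ (hwrap _),
        Finset.card_image_of_injective _ (hwrap _), hcard, pow_succ 2 (j + 1), mul_two]
    · simp only [S₀₁, S₁₀, Finset.mem_union, Finset.mem_image]
      rintro t (⟨x, hx, rfl⟩ | ⟨x, hx, rfl⟩)
      · exact psM_append_append_eq (hS x hx) _
      · rw [← psM_reverse]
        simpa using psM_append_append_eq ((psM_reverse x).trans (hS x hx)) [false, true]

theorem exists_le_ncard_psM_class (r j : ℕ) :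
    ∃ s : List Bool, s.length = 4 * j + r + 2 ∧
      2 ^ (j + 1) ≤ {t : List Bool | t.length = s.length ∧ psM t = psM s}.ncard := by
  obtain ⟨s, hs, S, hcard, hS⟩ := exists_finset_psM_eq r j
  refine ⟨s, hs, ?_⟩
  rw [← hcard, ← Set.ncard_coe_finset]
  exact Set.ncard_le_ncard (fun t ht => ⟨length_eq_of_psM_eq (hS t ht), hS t ht⟩)
    ((List.finite_length_eq _ _).subset fun t ht => ht.1)

theorem eq_of_psM_eq_of_runStarts {s t t' : List Bool} (ht : psM t = psM s)
    (ht' : psM t' = psM s)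
    (hstart : ∀ k ∈ runStarts (prefixOnes s) (prefixOnes s.reverse) (s.length / 2),
      (prefixOnes t (k + 1) = prefixOnes s (k + 1) ↔
        prefixOnes t' (k + 1) = prefixOnes s (k + 1))) :
    t = t' := by
  have hl := length_eq_of_psM_eq ht
  have hl' := length_eq_of_psM_eq ht'
  have hhalf := eq_and_eq_of_sym2_eq_of_runStarts (hasUnitSteps_prefixOnes s)
    (hasUnitSteps_prefixOnes s.reverse) (hasUnitSteps_prefixOnes t)
    (hasUnitSteps_prefixOnes t.reverse) (hasUnitSteps_prefixOnes t')
    (hasUnitSteps_prefixOnes t'.reverse) (by simp [prefixOnes])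
    (fun k hk => sym2_prefixOnes_eq_of_psM_eq ht (by omega))
    (fun k hk => sym2_prefixOnes_eq_of_psM_eq ht' (by omega)) hstart
  refine eq_of_prefixOnes_eq (hl.trans hl'.symm) fun k hk => ?_
  rcases le_or_gt k (s.length / 2) with hk₂ | hk₂
  · exact (hhalf k hk₂).1
  -- beyond the midpoint, the prefix count is the total minus a suffix count of length `< n / 2`
  have := prefixOnes_add_prefixOnes_reverse t hk
  have := prefixOnes_add_prefixOnes_reverse t' (hl.trans hl'.symm ▸ hk)
  have := (hhalf (s.length - k) (by omega)).2
  have := count_eq_of_psM_eq ht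
  have := count_eq_of_psM_eq ht'
  simp only [hl, hl'] at *
  omega

theorem ncard_psM_class_le (s : List Bool) :
    {t : List Bool | t.length = s.length ∧ psM t = psM s}.ncard ≤
      2 ^ ((s.length / 2 + 1) / 2) := by
  set R := runStarts (prefixOnes s) (prefixOnes s.reverse) (s.length / 2)
  let Φ (t : List Bool) : Finset ℕ :=
    R.filter fun k => prefixOnes t (k + 1) = prefixOnes s (k + 1)
  have hinj : Set.InjOn Φ {t | t.length = s.length ∧ psM t = psM s} := by
    intro t ht t' ht' hΦ
    refine eq_of_psM_eq_of_runStarts ht.2 ht'.2 fun k hk => ?_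
    have hΦk := Finset.ext_iff.1 hΦ k
    simp only [Φ, Finset.mem_filter, and_congr_right_iff] at hΦk
    exact hΦk hk
  calc _ ≤ (R.powerset : Set (Finset ℕ)).ncard :=
        Set.ncard_le_ncard_of_injOn Φ (fun _ _ => Finset.mem_powerset.2 (Finset.filter_subset _ _))
          hinj R.powerset.finite_toSet
    _ = 2 ^ R.card := by rw [Set.ncard_coe_finset, Finset.card_powerset]
    _ ≤ _ := Nat.pow_le_pow_right two_pos (card_runStarts_le _ _ _)

theorem max_card_equivalent_strings (n : ℕ) (hn : 2 ≤ n) :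
    (∀ s : List Bool, s.length = n →
        {t : List Bool | t.length = n ∧ psM t = psM s}.ncard ≤ 2 ^ ((n - 2) / 4 + 1)) ∧
    (∃ s : List Bool, s.length = n ∧
        {t : List Bool | t.length = n ∧ psM t = psM s}.ncard = 2 ^ ((n - 2) / 4 + 1)) := by
  have hexp : (n / 2 + 1) / 2 = (n - 2) / 4 + 1 := by omega
  obtain ⟨s₀, hs₀, hle⟩ := exists_le_ncard_psM_class ((n - 2) % 4) ((n - 2) / 4)
  replace hs₀ : s₀.length = n := by omega
  refine ⟨?_, s₀, hs₀, ?_⟩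
  · rintro s rfl
    exact hexp ▸ ncard_psM_class_le s
  · subst hs₀
    exact (hexp ▸ ncard_psM_class_le s₀).antisymm hle
end
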